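/- arXiv:2303.00820 — 11 statements merged into one kernel-verified Lean document; each statement's English description precedes it below -/
import Mathlib

section
/- Let F be an algebraically closed field of characteristic ≠ 2, let s ∈ F[t] be a product of distinct linear factors with all roots nonzero, and let n ≥ 1. Then there exists a polynomial r ∈ F[t] such that sⁿ divides r² − t. -/
open Polynomial

theorem exists_poly_sq_sub_X_dvd {F : Type*} [Field F] [IsAlgClosed F] (h2 : (2 : F) ≠ 0)
    (m : ℕ) (a : Fin m → F) (hinj : Function.Injective a) (h0 : ∀ k, a k ≠ 0)
    (n : ℕ) (hn : 1 ≤ n) :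
    ∃ r : Polynomial F,
      (∏ k, (Polynomial.X - Polynomial.C (a k))) ^ n ∣ r ^ 2 - Polynomial.X := by
  set s : Polynomial F := ∏ k, (X - C (a k)) with hs
  -- divisibility by s from root conditions
  have hsdvd : ∀ p : Polynomial F, (∀ k, p.eval (a k) = 0) → s ∣ p := by
    intro p hp
    refine Finset.prod_dvd_of_coprime ?_ fun k _ => dvd_iff_isRoot.mpr (hp k)
    intro i _ j _ hij
    exact (pairwise_coprime_X_sub_C hinj) hij
  -- coprimality with s from nonvanishing at roots
  have hscop : ∀ p : Polynomial F, (∀ k, p.eval (a k) ≠ 0) → IsCoprime s p := by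
    intro p hp
    refine IsCoprime.prod_left fun k _ => ?_
    have hirr : Irreducible (X - C (a k)) := irreducible_X_sub_C (a k)
    rw [(hirr.prime.coprime_iff_not_dvd)]
    intro hdvd
    exact hp k (dvd_iff_isRoot.mp hdvd)
  clear_value s
  -- strengthen: for all n ≥ 1
  induction n with
  | zero => omega
  | succ n ih =>
    rcases Nat.eq_or_lt_of_le hn with h1 | h1
    · -- n + 1 = 1, base case via interpolation
      have hm : n = 0 := by omega
      subst hm
      choose b hb using fun k => IsAlgClosed.exists_pow_nat_eq (a k) (n := 2) zero_lt_two
      set r := Lagrange.interpolate Finset.univ a b with hr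
      refine ⟨r, ?_⟩
      rw [pow_one]
      refine hsdvd _ fun k => ?_
      have hev : r.eval (a k) = b k :=
        Lagrange.eval_interpolate_at_node _ (hinj.injOn) (Finset.mem_univ k)
      simp [hev, hb k]
    · -- inductive step
      obtain ⟨r, hrd⟩ := ih (by omega)
      have hn1 : 1 ≤ n := by omega
      -- r evaluates to a square root of a k at each root
      have hrev : ∀ k, r.eval (a k) ≠ 0 := by
        intro k
        have h1dvd : s ∣ r ^ 2 - X := (dvd_pow_self s (Nat.one_le_iff_ne_zero.mp hn1)).trans hrd
        have hks : (X - C (a k)) ∣ s := hs ▸ Finset.dvd_prod_of_mem _ (Finset.mem_univ k)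
        have hk : (X - C (a k)) ∣ r ^ 2 - X := hks.trans h1dvd
        have := dvd_iff_isRoot.mp hk
        simp only [IsRoot, eval_sub, eval_pow, eval_X] at this
        intro h
        rw [h] at this
        simp at this
        exact h0 k this
      have hcop : IsCoprime s (2 * r) := by
        refine hscop _ fun k => ?_
        simp only [eval_mul, eval_ofNat]
        exact mul_ne_zero (by exact_mod_cast h2) (hrev k)
      obtain ⟨u, v, huv⟩ := hcop
      obtain ⟨q, hq⟩ := hrd
      refine ⟨r + (-(q * v)) * s ^ n, ?_⟩
      have key : (r + (-(q * v)) * s ^ n) ^ 2 - X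
          = s ^ n * (q * (u * s)) + (q * v) ^ 2 * (s ^ n) ^ 2 := by
        have h2rv : 2 * r * v = 1 - u * s := by linear_combination huv
        have : (r + (-(q * v)) * s ^ n) ^ 2 - X
            = (r ^ 2 - X) - s ^ n * (q * (2 * r * v)) + (q * v) ^ 2 * (s ^ n) ^ 2 := by ring
        rw [this, hq, h2rv]; ring
      rw [key]
      refine dvd_add ?_ ?_
      · have : s ^ (n + 1) = s ^ n * s := by ring
        rw [this]
        exact mul_dvd_mul_left _ ⟨q * u, by ring⟩
      · have hd : s ^ (n + 1) ∣ (s ^ n) ^ 2 := by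
          rw [← pow_mul]; exact pow_dvd_pow s (by omega)
        exact hd.mul_left _
end

section
/- Let F be an algebraically closed field of characteristic ≠ 2, A a finite-dimensional F-algebra, and y ∈ A invertible. Then the set y·F[y²] (elements of the form y·p(y²) for p ∈ F[t]) contains an element u with u² = 1. -/
/-!
Put `x = y²`. Since `y` commutes with every `p(x)`, it suffices to find `p` with `x · p(x)² = 1`,
i.e. a square root of `x⁻¹` in the commutative finite-dimensional algebra `F[x]`, in which `x` is a
unit. There every unit `a` is a square: interpolating square roots of the roots of the minimal
polynomial of `a` gives `q` with `q(a)² - a` nilpotent, and since `2` is invertible, Newton's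
iteration for `T² - a` turns `q(a)` into an exact square root.
-/

open Polynomial
open scoped IsMulCommutative -- the commutative ring structure on `Algebra.adjoin F {x}`

theorem isNilpotent_aeval_of_isRoot_of_isRoot_minpoly {F A : Type*} [Field F] [IsAlgClosed F]
    [Ring A] [Algebra F A] {a : A} (ha : IsIntegral F a) {g : F[X]}
    (hg : ∀ r, (minpoly F a).IsRoot r → g.IsRoot r) : IsNilpotent (aeval a g) := by
  classical
  rcases eq_or_ne g 0 with rfl | hg0
  · simp
  set m := minpoly F a
  refine ⟨m.natDegree, ?_⟩
  suffices m ∣ g ^ m.natDegree by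
    rw [← map_pow]
    exact aeval_eq_zero_of_dvd_aeval_eq_zero this (minpoly.aeval F a)
  rw [IsAlgClosed.dvd_iff_roots_le_roots (minpoly.ne_zero ha) (pow_ne_zero _ hg0),
    Multiset.le_iff_count]
  intro r
  rw [roots_pow, Multiset.count_nsmul]
  by_cases hr : m.IsRoot r
  · have hgr : 1 ≤ g.roots.count r := Multiset.one_le_count_iff_mem.mpr
      ((mem_roots hg0).mpr (hg r hr))
    calc m.roots.count r ≤ m.natDegree := (Multiset.count_le_card _ _).trans (card_roots' m)
      _ ≤ m.natDegree * g.roots.count r := Nat.le_mul_of_pos_right _ hgr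
  · rw [Multiset.count_eq_zero.mpr (fun h => hr (isRoot_of_mem_roots h))]
    exact Nat.zero_le _

theorem exists_isNilpotent_aeval_pow_sub {F A : Type*} [Field F] [IsAlgClosed F]
    [Ring A] [Algebra F A] {a : A} (ha : IsIntegral F a) {n : ℕ} (hn : 0 < n) :
    ∃ q : F[X], IsNilpotent (aeval a q ^ n - a) := by
  classical
  choose root hroot using fun r : F => IsAlgClosed.exists_pow_nat_eq r hn
  let q := Lagrange.interpolate (minpoly F a).roots.toFinset id root
  refine ⟨q, ?_⟩
  have := isNilpotent_aeval_of_isRoot_of_isRoot_minpoly ha (g := q ^ n - X) fun r hr => by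
    have hmem : r ∈ (minpoly F a).roots.toFinset := by
      rwa [Multiset.mem_toFinset, mem_roots (minpoly.ne_zero ha)]
    have hq : q.eval r = root r := Lagrange.eval_interpolate_at_node root (Set.injOn_id _) hmem
    simp [hq, hroot]
  simpa using this

theorem exists_pow_eq_of_isNilpotent_pow_sub {S : Type*} [CommRing S] {n : ℕ}
    (hn : IsUnit (n : S)) {a z : S} (ha : IsUnit a) (hz : IsNilpotent (z ^ n - a)) :
    ∃ w, w ^ n = a := by
  have hzn : IsUnit (z ^ n) := by simpa using hz.isUnit_add_left_of_commute ha (Commute.all _ _)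
  have hz' : IsUnit (z ^ (n - 1)) := by
    rcases n with _ | n
    · simp
    · exact (isUnit_pow_succ_iff.mp hzn).pow _
  obtain ⟨w, -, hw⟩ := (existsUnique_nilpotent_sub_and_aeval_eq_zero (P := X ^ n - C a) (x := z)
    (by simpa using hz) (by simpa [derivative_X_pow] using hn.mul hz')).exists
  exact ⟨w, by simpa [sub_eq_zero] using hw⟩

theorem exists_pow_eq_of_isUnit {F S : Type*} [Field F] [IsAlgClosed F] [CommRing S]
    [Algebra F S] {n : ℕ} (hn : (n : F) ≠ 0) {a : S} (hi : IsIntegral F a) (ha : IsUnit a) :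
    ∃ w, w ^ n = a := by
  have hn0 : 0 < n := Nat.pos_of_ne_zero fun h => hn (by simp [h])
  obtain ⟨q, hq⟩ := exists_isNilpotent_aeval_pow_sub hi hn0
  exact exists_pow_eq_of_isNilpotent_pow_sub (by simpa using hn.isUnit.map (algebraMap F S)) ha hq

theorem Algebra.isUnit_self_adjoin_singleton {R A : Type*} [CommRing R] [IsArtinianRing R]
    [Ring A] [Algebra R A] {a : A} (hi : IsIntegral R a) (ha : IsUnit a) :
    IsUnit (⟨a, self_mem_adjoin_singleton R a⟩ : adjoin R {a}) :=
  have : Module.Finite R (adjoin R {a}) := finite_adjoin_simple_of_isIntegral hi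
  have : IsArtinianRing (adjoin R {a}) := isArtinian_of_tower R inferInstance
  IsArtinianRing.isUnit_of_mem_nonZeroDivisors <|
    comap_nonZeroDivisors_le_of_injective (f := (adjoin R {a}).subtype) Subtype.val_injective
      ha.mem_nonZeroDivisors

theorem exists_involution_in_odd_part {F : Type*} [Field F] [IsAlgClosed F] (h2 : (2 : F) ≠ 0)
    {A : Type*} [Ring A] [Algebra F A] [FiniteDimensional F A] (y : Aˣ) :
    ∃ p : Polynomial F, ((y : A) * Polynomial.aeval ((y : A) ^ 2) p) ^ 2 = 1 := by
  set x : A := (y : A) ^ 2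
  have hx' := Algebra.isUnit_self_adjoin_singleton (IsIntegral.of_finite F x) (y.isUnit.pow 2)
  obtain ⟨w, hw⟩ := exists_pow_eq_of_isUnit (n := 2) (by exact_mod_cast h2)
    (IsIntegral.of_finite F (↑hx'.unit⁻¹ : Algebra.adjoin F {x})) (Units.isUnit _)
  obtain ⟨p, hp⟩ : ∃ p : F[X], aeval x p = w := by
    simpa [Algebra.adjoin_singleton_eq_range_aeval] using w.2
  have hxp : x * aeval x p ^ 2 = 1 := by
    have hxw : ⟨x, _⟩ * w ^ 2 = 1 := hw ▸ hx'.mul_val_inv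
    rw [hp]
    exact congrArg Subtype.val hxw
  refine ⟨p, ?_⟩
  rw [(Algebra.commute_of_mem_adjoin_singleton_of_commute (aeval_mem_adjoin_singleton F x)
    ((Commute.refl _).pow_right 2)).mul_pow, hxp]
end

section
/- Let F be an algebraically closed field of characteristic ≠ 2 and A a finite-dimensional F-algebra. An invertible element x of A is a product of two involutions of the unit group Aˣ if and only if x is conjugate to x⁻¹ in Aˣ. -/
open Polynomial

/-- Square root of X modulo a power of a linear polynomial with nonzero root. -/
lemma sqrt_X_mod_linear_pow {F : Type*} [Field F] [IsAlgClosed F] (h2 : (2:F) ≠ 0)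
    (l : F) (hl : l ≠ 0) (e : ℕ) :
    ∃ p : F[X], (X - C l) ^ (e + 1) ∣ p ^ 2 - X := by
  induction e with
  | zero =>
    obtain ⟨c, hc⟩ := IsAlgClosed.exists_pow_nat_eq l two_pos
    refine ⟨C c, ?_⟩
    have : (C c : F[X]) ^ 2 - X = -(X - C l) := by
      rw [← C_pow, hc]; ring
    rw [this, pow_one]
    exact dvd_neg.mpr dvd_rfl
  | succ e ih =>
    obtain ⟨p, r, hr⟩ := ih
    have hpl : p.eval l ^ 2 = l := by
      have h1 : (X - C l) ∣ p ^ 2 - X := dvd_trans (dvd_pow_self _ (Nat.succ_ne_zero e)) ⟨r, hr⟩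
      have := (dvd_iff_isRoot).mp h1
      simpa [IsRoot, sub_eq_zero] using this
    have hpl0 : p.eval l ≠ 0 := fun h => hl (by rw [← hpl, h]; ring)
    set c : F := -(r.eval l) / (2 * p.eval l) with hc
    refine ⟨p + C c * (X - C l) ^ (e + 1), ?_⟩
    have expand : (p + C c * (X - C l) ^ (e + 1)) ^ 2 - X
        = (X - C l) ^ (e + 1) * (r + 2 * C c * p) + (C c) ^ 2 * ((X - C l) ^ (e + 1)) ^ 2 := by
      have : p ^ 2 - X = (X - C l) ^ (e + 1) * r := hr
      ring_nf
      ring_nf at this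
      linear_combination this
    rw [expand]
    apply dvd_add
    · rw [pow_succ]
      apply mul_dvd_mul_left
      rw [dvd_iff_isRoot]
      simp only [IsRoot, eval_add, eval_mul, eval_ofNat, eval_C]
      rw [hc]
      field_simp
      ring
    · apply Dvd.dvd.mul_left
      rw [← pow_mul]
      exact pow_dvd_pow _ (by omega)

/-- CRT step: combine square roots of X modulo coprime polynomials. -/
lemma sqrt_X_mod_mul {F : Type*} [Field F] {a b p₁ p₂ : F[X]} (hco : IsCoprime a b)
    (h1 : a ∣ p₁ ^ 2 - X) (h2 : b ∣ p₂ ^ 2 - X) :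
    ∃ p : F[X], a * b ∣ p ^ 2 - X := by
  obtain ⟨u, v, huv⟩ := id hco
  set p := p₁ * v * b + p₂ * u * a with hp
  refine ⟨p, hco.mul_dvd ?_ ?_⟩
  · have hpa : a ∣ p - p₁ := by
      have : p - p₁ = a * (p₂ * u - p₁ * u) := by
        rw [hp]; linear_combination (p₁ : F[X]) * huv
      exact ⟨_, this⟩
    have : p ^ 2 - X = (p - p₁) * (p + p₁) + (p₁ ^ 2 - X) := by ring
    rw [this]
    exact dvd_add (hpa.mul_right _) h1
  · have hpb : b ∣ p - p₂ := by
      have : p - p₂ = b * (p₁ * v - p₂ * v) := by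
        rw [hp]; linear_combination (p₂ : F[X]) * huv
      exact ⟨_, this⟩
    have : p ^ 2 - X = (p - p₂) * (p + p₂) + (p₂ ^ 2 - X) := by ring
    rw [this]
    exact dvd_add (hpb.mul_right _) h2

/-- Key lemma: square root of X modulo any polynomial not divisible by X. -/
lemma sqrt_X_mod {F : Type*} [Field F] [IsAlgClosed F] (h2 : (2:F) ≠ 0) :
    ∀ (n : ℕ) (m : F[X]), m.natDegree ≤ n → m.eval 0 ≠ 0 → ∃ p : F[X], m ∣ p ^ 2 - X := by
  intro n
  induction n with
  | zero =>
    intro m hdeg h0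
    have hm0 : m ≠ 0 := fun h => h0 (by simp [h])
    have : IsUnit m := by
      rw [Polynomial.eq_C_of_natDegree_eq_zero (Nat.le_zero.mp hdeg)]
      exact isUnit_C.mpr (isUnit_iff_ne_zero.mpr (by rwa [coeff_zero_eq_eval_zero]))
    exact ⟨0, this.dvd⟩
  | succ n ih =>
    intro m hdeg h0
    have hm0 : m ≠ 0 := fun h => h0 (by simp [h])
    by_cases hd : m.natDegree = 0
    · have : IsUnit m := by
        rw [Polynomial.eq_C_of_natDegree_eq_zero hd]
        exact isUnit_C.mpr (isUnit_iff_ne_zero.mpr (by rwa [coeff_zero_eq_eval_zero]))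
      exact ⟨0, this.dvd⟩
    · have hdeg0 : m.degree ≠ 0 := fun h =>
        hd (natDegree_eq_zero_iff_degree_le_zero.mpr h.le)
      obtain ⟨l, hl⟩ := IsAlgClosed.exists_root m hdeg0
      have hl0 : l ≠ 0 := by
        rintro rfl; exact h0 hl
      obtain ⟨q, hq, hndvd⟩ := m.exists_eq_pow_rootMultiplicity_mul_and_not_dvd hm0 l
      set e := m.rootMultiplicity l with he
      have he1 : 1 ≤ e := (Polynomial.le_rootMultiplicity_iff hm0).mpr (by
        simpa using (dvd_iff_isRoot).mpr hl)
      have hq0 : q ≠ 0 := by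
        rintro rfl; exact hm0 (by simpa using hq)
      have hqdeg : q.natDegree ≤ n := by
        have hXl : (X - C l : F[X]) ≠ 0 := X_sub_C_ne_zero l
        have : m.natDegree = e * 1 + q.natDegree := by
          rw [hq, natDegree_mul (pow_ne_zero _ hXl) hq0, natDegree_pow, natDegree_X_sub_C]
        omega
      have hq_eval : q.eval 0 ≠ 0 := by
        intro h
        apply h0
        rw [hq]; simp [h]
      obtain ⟨p₂, hp₂⟩ := ih q hqdeg hq_eval
      obtain ⟨p₁, hp₁⟩ := sqrt_X_mod_linear_pow h2 l hl0 (e - 1)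
      rw [Nat.sub_add_cancel he1] at hp₁
      have hco : IsCoprime ((X - C l) ^ e) q :=
        ((irreducible_X_sub_C l).coprime_iff_not_dvd.mpr hndvd).pow_left
      obtain ⟨p, hp⟩ := sqrt_X_mod_mul hco hp₁ hp₂
      exact ⟨p, hq ▸ hp⟩

/-- Elements commuting with `v` commute with polynomials in `v`. -/
lemma commute_aeval {F : Type*} [CommSemiring F] {A : Type*} [Ring A] [Algebra F A]
    {z v : A} (hz : Commute z v) (p : F[X]) : Commute z (Polynomial.aeval v p) := by
  induction p using Polynomial.induction_on' with
  | add f g hf hg => simpa [map_add] using hf.add_right hg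
  | monomial n a =>
    rw [aeval_monomial]
    have h1 : Commute z ((algebraMap F A) a) := (Algebra.commutes a z).symm
    exact h1.mul_right (hz.pow_right n)

theorem bireflectional_iff_conj_inv_algebra {F : Type*} [Field F] [IsAlgClosed F]
    (h2 : (2 : F) ≠ 0) {A : Type*} [Ring A] [Algebra F A] [FiniteDimensional F A] (x : Aˣ) :
    (∃ a b : Aˣ, a ^ 2 = 1 ∧ b ^ 2 = 1 ∧ x = a * b) ↔
    (∃ y : Aˣ, y * x * y⁻¹ = x⁻¹) := by
  constructor
  · rintro ⟨a, b, ha, hb, rfl⟩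
    refine ⟨a, ?_⟩
    have ha' : a⁻¹ = a := inv_eq_of_mul_eq_one_right (by rw [← sq, ha])
    have hb' : b⁻¹ = b := inv_eq_of_mul_eq_one_right (by rw [← sq, hb])
    rw [mul_inv_rev, ha', hb', ← mul_assoc a a b, ← sq, ha, one_mul]
  · rintro ⟨y, hy⟩
    -- basic commutation relations in the unit group
    have hy1 : y * x = x⁻¹ * y := by
      have := congrArg (· * y) hy
      simpa [mul_assoc] using this
    have hy2 : x * y = y * x⁻¹ := by
      calc x * y = x * (y * x) * x⁻¹ := by
            rw [mul_assoc, mul_assoc, mul_inv_cancel, mul_one]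
        _ = x * (x⁻¹ * y) * x⁻¹ := by rw [hy1]
        _ = y * x⁻¹ := by rw [← mul_assoc, mul_inv_cancel, one_mul]
    set u : Aˣ := y ^ 2 with hu
    have hxu_units : u * x = x * u := by
      calc u * x = y * (y * x) := by rw [hu, sq, mul_assoc]
        _ = y * (x⁻¹ * y) := by rw [hy1]
        _ = (y * x⁻¹) * y := by rw [mul_assoc]
        _ = (x * y) * y := by rw [← hy2]
        _ = x * u := by rw [hu, sq, mul_assoc]
    have hxu : Commute ((x:A)) ((u:A)) := by
      have := congrArg (Units.val) hxu_units
      push_cast at this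
      exact this.symm
    have hyu : Commute ((y:A)) ((u:A)) := by
      have h : ((u:Aˣ):A) = (y:A) * (y:A) := by rw [hu]; push_cast [sq]; ring
      rw [h]
      exact (Commute.refl _).mul_right (Commute.refl _)
    have hint : IsIntegral F ((u:A)) := IsIntegral.of_finite F _
    have hm0 : (minpoly F ((u:A))).eval 0 ≠ 0 := by
      intro h
      have hXdvd : (X : F[X]) ∣ minpoly F ((u:A)) :=
        X_dvd_iff.mpr (by rwa [coeff_zero_eq_eval_zero])
      obtain ⟨q, hq⟩ := hXdvd
      have hmne : minpoly F ((u:A)) ≠ 0 := minpoly.ne_zero hint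
      have hq0 : q ≠ 0 := by rintro rfl; exact hmne (by simpa using hq)
      have haq : Polynomial.aeval ((u:A)) q = 0 := by
        have h0 : Polynomial.aeval ((u:A)) (minpoly F ((u:A))) = 0 := minpoly.aeval F _
        rw [hq, map_mul, aeval_X] at h0
        calc Polynomial.aeval ((u:A)) q
            = ((u⁻¹:Aˣ):A) * (((u:Aˣ):A) * Polynomial.aeval ((u:A)) q) := by
              rw [← mul_assoc, Units.inv_mul, one_mul]
          _ = 0 := by rw [h0, mul_zero]
      have hle := natDegree_le_natDegree (minpoly.degree_le_of_ne_zero F ((u:A)) hq0 haq)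
      have hdeq : (minpoly F ((u:A))).natDegree = 1 + q.natDegree := by
        rw [hq, natDegree_mul X_ne_zero hq0, natDegree_X]
      omega
    obtain ⟨p, hp⟩ := sqrt_X_mod h2 (minpoly F ((u:A))).natDegree _ le_rfl hm0
    set s := Polynomial.aeval ((u:A)) p with hs
    have hs2 : s * s = (u:A) := by
      obtain ⟨k, hk⟩ := hp
      have hk2 := congrArg (Polynomial.aeval ((u:A))) hk
      rw [map_sub, map_pow, aeval_X, map_mul, minpoly.aeval, zero_mul, sub_eq_zero, sq] at hk2
      exact hk2
    have hcx : Commute s ((x:A)) := (commute_aeval hxu p).symm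
    have hcy : Commute s ((y:A)) := (commute_aeval hyu p).symm
    have hcu : Commute s ((u:A)) := (commute_aeval (Commute.refl _) p).symm
    have hcuinv : Commute s (((u⁻¹:Aˣ)):A) := hcu.units_inv_right
    have hinv1 : s * (((u⁻¹:Aˣ):A) * s) = 1 := by
      rw [← mul_assoc, hcuinv.eq, mul_assoc, hs2, Units.inv_mul]
    have hinv2 : (((u⁻¹:Aˣ):A) * s) * s = 1 := by
      rw [mul_assoc, hs2, Units.inv_mul]
    set su : Aˣ := ⟨s, ((u⁻¹:Aˣ):A) * s, hinv1, hinv2⟩ with hsu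
    have hsusq : su * su = u := Units.ext (by push_cast [hsu]; exact hs2)
    have hyc : Commute y su := Units.ext (by push_cast [hsu]; exact hcy.symm.eq)
    have hxc : Commute x su := Units.ext (by push_cast [hsu]; exact hcx.symm.eq)
    set a : Aˣ := y * su⁻¹ with hadef
    have ha2 : a ^ 2 = 1 := by
      have hyinv : Commute y su⁻¹ := hyc.inv_right
      have h1 : a * a = (y * y) * (su⁻¹ * su⁻¹) := by
        calc a * a = y * su⁻¹ * (y * su⁻¹) := by rw [hadef]
          _ = y * (su⁻¹ * y) * su⁻¹ := by simp only [mul_assoc]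
          _ = y * (y * su⁻¹) * su⁻¹ := by rw [hyinv.symm.eq]
          _ = (y * y) * (su⁻¹ * su⁻¹) := by simp only [mul_assoc]
      have h4 : su⁻¹ * su⁻¹ = u⁻¹ := by rw [← mul_inv_rev, hsusq]
      rw [sq, h1, h4, ← sq, ← hu]
      exact mul_inv_cancel u
    have haxa : a * x * a⁻¹ = x⁻¹ := by
      have hxinv : Commute x su⁻¹ := hxc.inv_right
      calc a * x * a⁻¹ = y * su⁻¹ * x * (su * y⁻¹) := by rw [hadef, mul_inv_rev, inv_inv]
        _ = y * (su⁻¹ * x) * (su * y⁻¹) := by rw [mul_assoc y]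
        _ = y * (x * su⁻¹) * (su * y⁻¹) := by rw [hxinv.symm.eq]
        _ = y * x * (su⁻¹ * su) * y⁻¹ := by simp only [mul_assoc]
        _ = y * x * y⁻¹ := by rw [inv_mul_cancel, mul_one]
        _ = x⁻¹ := hy
    have ha' : a⁻¹ = a := inv_eq_of_mul_eq_one_right (by rw [← sq, ha2])
    refine ⟨a, a * x, ha2, ?_, ?_⟩
    · have h5 : (a * x) ^ 2 = (a * x * a⁻¹) * x := by rw [ha', sq]; simp only [mul_assoc]
      rw [h5, haxa, inv_mul_cancel x]
    · rw [← mul_assoc, ← sq, ha2, one_mul]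
end

section
/- Let A be a ring, x ∈ A, and i ∈ A with i² = 1 and i x i = −x. Then x is the sum of two square-zero elements of A, namely x = p x q + q x p where p = (1+i)/2 and q = (1−i)/2, provided 2 is invertible in A. -/
theorem sum_sq_zero_of_involution {A : Type*} [Ring A] [Invertible (2 : A)]
    (x i : A) (hi : i ^ 2 = 1) (hix : i * x * i = -x) :
    (((⅟2 : A) * (1 + i)) * x * ((⅟2 : A) * (1 - i))) ^ 2 = 0 ∧
    (((⅟2 : A) * (1 - i)) * x * ((⅟2 : A) * (1 + i))) ^ 2 = 0 ∧
    x = ((⅟2 : A) * (1 + i)) * x * ((⅟2 : A) * (1 - i)) +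
        ((⅟2 : A) * (1 - i)) * x * ((⅟2 : A) * (1 + i)) := by
  have hc : ∀ a : A, ⅟2 * a = a * ⅟2 := fun a =>
    Commute.invOf_left <| by
      rw [show (2 : A) = 1 + 1 by norm_num]
      exact (Commute.one_left a).add_left (Commute.one_left a)
  have key1 : ((1 : A) - i) * (1 + i) = 1 - i ^ 2 := by noncomm_ring
  have key2 : ((1 : A) + i) * (1 - i) = 1 - i ^ 2 := by noncomm_ring
  rw [hi, sub_self] at key1 key2
  have hqp : ((⅟2 : A) * (1 - i)) * ((⅟2 : A) * (1 + i)) = 0 := by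
    rw [← mul_assoc, mul_assoc (⅟2 : A) _ (⅟2 : A), ← hc, ← mul_assoc, mul_assoc, key1,
      mul_zero]
  have hpq : ((⅟2 : A) * (1 + i)) * ((⅟2 : A) * (1 - i)) = 0 := by
    rw [← mul_assoc, mul_assoc (⅟2 : A) _ (⅟2 : A), ← hc, ← mul_assoc, mul_assoc, key2,
      mul_zero]
  refine ⟨?_, ?_, ?_⟩
  · have : (((⅟2 : A) * (1 + i)) * x * ((⅟2 : A) * (1 - i))) ^ 2 =
        ((⅟2 : A) * (1 + i)) * x * ((((⅟2 : A) * (1 - i)) * ((⅟2 : A) * (1 + i))) * x *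
          ((⅟2 : A) * (1 - i))) := by
      rw [sq]; noncomm_ring
    rw [this, hqp, zero_mul, zero_mul, mul_zero]
  · have : (((⅟2 : A) * (1 - i)) * x * ((⅟2 : A) * (1 + i))) ^ 2 =
        ((⅟2 : A) * (1 - i)) * x * ((((⅟2 : A) * (1 + i)) * ((⅟2 : A) * (1 - i))) * x *
          ((⅟2 : A) * (1 + i))) := by
      rw [sq]; noncomm_ring
    rw [this, hpq, zero_mul, zero_mul, mul_zero]
  · have expand : ((⅟2 : A) * (1 + i)) * x * ((⅟2 : A) * (1 - i)) +
        ((⅟2 : A) * (1 - i)) * x * ((⅟2 : A) * (1 + i)) =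
        (⅟2 : A) * (⅟2 : A) * ((1 + i) * x * (1 - i) + (1 - i) * x * (1 + i)) := by
      rw [mul_assoc ((⅟2 : A) * (1 + i)) x, ← hc, mul_assoc ((⅟2 : A) * (1 - i)) x, ← hc]
      noncomm_ring [hc]
    rw [expand]
    have h4 : ((1 : A) + i) * x * (1 - i) + (1 - i) * x * (1 + i) = 2 * (2 * x) := by
      have e : ((1 : A) + i) * x * (1 - i) + (1 - i) * x * (1 + i) = 2 * x - 2 * (i * x * i) := by
        noncomm_ring
      rw [e, hix]; noncomm_ring
    rw [h4, ← mul_assoc (⅟2 * ⅟2 : A) 2, mul_assoc (⅟2 : A) (⅟2 : A) 2, invOf_mul_self,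
      mul_one, ← mul_assoc, invOf_mul_self, one_mul]
end

section
/- Let F be an algebraically closed field of characteristic ≠ 2 and A a finite-dimensional F-algebra. If x ∈ A is conjugate to −x (i.e., there is an invertible y with y x y⁻¹ = −x), then x is the sum of two square-zero elements of A. -/
/-!
If `y x y⁻¹ = -x`, then `y²` commutes with `x` and `y`. Over an algebraically closed field of
characteristic `≠ 2` the unit `y⁻²` of the finite-dimensional commutative algebra `F[y²]` has
a square root `r` (square roots of the eigenvalues, interpolated and then refined by Newton's
iteration), and `r` commutes with everything `y²` commutes with. Then `ε = y r` satisfies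
`ε² = 1` and `ε x = -x ε`, so `x ± ε x` are square-zero and `x = ½ (x + ε x) + ½ (x - ε x)`.
-/

open Polynomial

theorem Polynomial.Splits.dvd_pow_natDegree_of_forall_isRoot {R : Type*} [CommRing R] [IsDomain R]
    {f g : R[X]} (hf : f.Splits) (hm : f.Monic) (hg : ∀ a ∈ f.roots, g.IsRoot a) :
    f ∣ g ^ f.natDegree :=
  calc f = (f.roots.map (X - C ·)).prod := hf.eq_prod_roots_of_monic hm
    _ ∣ (f.roots.map fun _ => g).prod :=
      Multiset.prod_dvd_prod_of_dvd _ _ fun a ha => dvd_iff_isRoot.2 (hg a ha)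
    _ = g ^ f.natDegree := by
      rw [Multiset.map_const', Multiset.prod_replicate, hf.natDegree_eq_card_roots]

theorem IsIntegral.exists_isNilpotent_pow_sub {F A : Type*} [Field F] [IsAlgClosed F] [Ring A]
    [Algebra F A] {v : A} (hv : IsIntegral F v) {n : ℕ} (hn : 0 < n) :
    ∃ s : A, IsNilpotent (s ^ n - v) := by
  classical
  choose root hroot using fun a : F => IsAlgClosed.exists_pow_nat_eq a hn
  set q := Lagrange.interpolate (minpoly F v).roots.toFinset id root
  have hq : ∀ a ∈ (minpoly F v).roots, (q ^ n - X).IsRoot a := by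
    intro a ha
    have hqa : q.eval a = root a :=
      Lagrange.eval_interpolate_at_node root (Set.injOn_id _) (Multiset.mem_toFinset.2 ha)
    rw [IsRoot, eval_sub, eval_pow, eval_X, hqa, hroot, sub_self]
  have hdvd := (IsAlgClosed.splits (minpoly F v)).dvd_pow_natDegree_of_forall_isRoot
    (minpoly.monic hv) hq
  refine ⟨aeval v q, (minpoly F v).natDegree, ?_⟩
  simpa using minpoly.dvd_iff.mp hdvd

theorem exists_pow_eq_of_isUnit_of_isNilpotent_pow_sub {R : Type*} [CommRing R] {n : ℕ}
    (hn : n ≠ 0) (hn_unit : IsUnit (n : R)) {u s : R} (hu : IsUnit u)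
    (hs : IsNilpotent (s ^ n - u)) : ∃ r, r ^ n = u := by
  have hP : aeval s (X ^ n - C u) = s ^ n - u := by simp
  have hs_unit : IsUnit s := by
    rw [← isUnit_pow_iff hn, ← sub_add_cancel (s ^ n) u]
    exact hs.isUnit_add_right_of_commute hu (Commute.all _ _)
  have hP' : IsUnit (aeval s (derivative (X ^ n - C u))) := by
    rw [derivative_sub, derivative_X_pow, derivative_C, sub_zero, map_mul]
    simpa using hn_unit.mul (hs_unit.pow _)
  obtain ⟨r, -, hr⟩ := (existsUnique_nilpotent_sub_and_aeval_eq_zero (hP ▸ hs) hP').exists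
  exact ⟨r, by simpa [sub_eq_zero] using hr⟩

open scoped IsMulCommutative in
theorem exists_pow_eq_and_commute_of_isUnit {F A : Type*} [Field F] [IsAlgClosed F] [Ring A]
    [Algebra F A] [FiniteDimensional F A] {n : ℕ} (hn : (n : F) ≠ 0) {u : A} (hu : IsUnit u) :
    ∃ r : A, r ^ n = u ∧ ∀ z : A, Commute u z → Commute r z := by
  set B := Algebra.adjoin F {u}
  let b : B := ⟨u, Algebra.self_mem_adjoin_singleton F u⟩
  have hb : IsUnit b := IsArtinianRing.isUnit_of_isIntegral_of_nonZeroDivisor (R := F)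
    (.of_finite F b)
    (comap_nonZeroDivisors_le_of_injective (f := B.val) Subtype.val_injective
      hu.mem_nonZeroDivisors)
  have hn0 : n ≠ 0 := by rintro rfl; exact hn Nat.cast_zero
  have hnB : IsUnit (n : B) := by simpa only [map_natCast] using hn.isUnit.map (algebraMap F B)
  obtain ⟨s, hs⟩ :=
    (IsIntegral.of_finite F b).exists_isNilpotent_pow_sub (Nat.pos_of_ne_zero hn0)
  obtain ⟨r, hr⟩ := exists_pow_eq_of_isUnit_of_isNilpotent_pow_sub hn0 hnB hb hs
  exact ⟨r, congrArg Subtype.val hr, fun z hz =>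
    (Algebra.commute_of_mem_adjoin_singleton_of_commute r.2 hz.symm).symm⟩

theorem sq_add_mul_eq_zero_of_mul_self_eq_one {A : Type*} [Ring A] {ε x : A} (hε : ε * ε = 1)
    (hεx : ε * x = -(x * ε)) : (x + ε * x) ^ 2 = 0 := by
  have hxεx : x * ε * x = -(ε * x * x) := by rw [hεx, neg_mul, neg_neg]
  have hεxεx : ε * x * (ε * x) = -(x * x) :=
    calc ε * x * (ε * x) = ε * (x * ε * x) := by simp only [mul_assoc]
      _ = -(x * x) := by rw [hxεx, mul_neg, ← mul_assoc, ← mul_assoc, hε, one_mul]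
  rw [sq, add_mul, mul_add, mul_add, ← mul_assoc x, hxεx, hεxεx]
  abel

theorem exists_sq_eq_zero_add_of_mul_self_eq_one {F A : Type*} [Field F] [Ring A] [Algebra F A]
    (h2 : (2 : F) ≠ 0) {ε x : A} (hε : ε * ε = 1) (hεx : ε * x = -(x * ε)) :
    ∃ a b : A, a ^ 2 = 0 ∧ b ^ 2 = 0 ∧ x = a + b := by
  have hεx' : -ε * x = -(x * -ε) := by rw [neg_mul, mul_neg, hεx]
  refine ⟨(2 : F)⁻¹ • (x + ε * x), (2 : F)⁻¹ • (x + -ε * x), ?_, ?_, ?_⟩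
  · rw [_root_.smul_pow, sq_add_mul_eq_zero_of_mul_self_eq_one hε hεx, smul_zero]
  · rw [_root_.smul_pow, sq_add_mul_eq_zero_of_mul_self_eq_one (by rwa [neg_mul_neg]) hεx',
      smul_zero]
  · rw [← smul_add, neg_mul, add_add_add_comm, add_neg_cancel, add_zero, ← two_smul F x,
      smul_smul, inv_mul_cancel₀ h2, one_smul]

theorem exists_mul_self_eq_one_anticommute_of_conj_neg {F A : Type*} [Field F] [IsAlgClosed F]
    [Ring A] [Algebra F A] [FiniteDimensional F A] (h2 : (2 : F) ≠ 0) {x : A} {y : Aˣ}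
    (hy : (y : A) * x * (↑y⁻¹ : A) = -x) : ∃ ε : A, ε * ε = 1 ∧ ε * x = -(x * ε) := by
  have hyx : SemiconjBy (y : A) x (-x) := (Units.mul_inv_eq_iff_eq_mul y).mp hy
  have hyx_inv : SemiconjBy (↑y⁻¹ : A) (-x) x := hyx.units_inv_symm_left
  have hyx_inv_neg : SemiconjBy (↑y⁻¹ : A) x (-x) := by simpa using hyx_inv.neg_right
  obtain ⟨r, hr, hr_comm⟩ :=
    exists_pow_eq_and_commute_of_isUnit (n := 2) (by exact_mod_cast h2) (y⁻¹ * y⁻¹).isUnit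
  have hrx : Commute r x := hr_comm x (by rw [Units.val_mul]; exact hyx_inv.mul_left hyx_inv_neg)
  have hry : Commute r y := hr_comm y (by simp)
  refine ⟨y * r, ?_, ?_⟩
  · calc (y : A) * r * (y * r) = y * y * r ^ 2 := by rw [hry.mul_mul_mul_comm, sq]
      _ = 1 := by simp [hr, mul_assoc]
  · calc (y : A) * r * x = y * x * r := by rw [mul_assoc, hrx.eq, ← mul_assoc]
      _ = -(x * (y * r)) := by rw [hyx.eq, neg_mul, neg_mul, mul_assoc]

theorem sum_two_square_zero_of_conj_neg {F : Type*} [Field F] [IsAlgClosed F]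
    (h2 : (2 : F) ≠ 0) {A : Type*} [Ring A] [Algebra F A] [FiniteDimensional F A]
    (x : A) (h : ∃ y : Aˣ, (y : A) * x * (↑y⁻¹ : A) = -x) :
    ∃ a b : A, a ^ 2 = 0 ∧ b ^ 2 = 0 ∧ x = a + b := by
  obtain ⟨y, hy⟩ := h
  obtain ⟨ε, hε, hεx⟩ := exists_mul_self_eq_one_anticommute_of_conj_neg h2 hy
  exact exists_sq_eq_zero_add_of_mul_self_eq_one h2 hε hεx
end

section
/- Let R be a ring and x an invertible element of R such that x = a + b with a² = b² = 0. Then the element y = ab − ba satisfies y² = x⁴ and y x = −x y; in particular y is invertible and conjugates x to −x. -/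
theorem commutator_of_square_zero_decomposition {R : Type*} [Ring R] (x : Rˣ) (a b : R)
    (ha : a ^ 2 = 0) (hb : b ^ 2 = 0) (hx : (x : R) = a + b) :
    (a * b - b * a) ^ 2 = (x : R) ^ 4 ∧
    (a * b - b * a) * x = -((x : R) * (a * b - b * a)) ∧
    ∃ y : Rˣ, (y : R) = a * b - b * a ∧ (y : R) * x * (↑y⁻¹ : R) = -(x : R) := by
  have ha' : a * a = 0 := by simpa [pow_two] using ha
  have hb' : b * b = 0 := by simpa [pow_two] using hb
  have hy2 : (a * b - b * a) ^ 2 = (x : R) ^ 4 := by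
    have h4 : (x : R) ^ 4 = ((x : R) * (x : R)) * ((x : R) * (x : R)) := by
      rw [show (4:ℕ) = 2 * 2 by norm_num, pow_mul, pow_two, pow_two]
    rw [h4, hx]
    have e0 : (a + b) * (a + b) = a * b + b * a + (a * a + b * b) := by noncomm_ring
    rw [e0, ha', hb']
    have e1 : (a * b - b * a) ^ 2 =
        a * b * (a * b) + b * a * (b * a) - (a * (b * b) * a + b * (a * a) * b) := by
      noncomm_ring
    have e2 : (a * b + b * a + (0 + 0)) * (a * b + b * a + (0 + 0)) =
        a * b * (a * b) + b * a * (b * a) + (a * (b * b) * a + b * (a * a) * b) := by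
      noncomm_ring
    rw [e1, e2, ha', hb']
    simp
  have hyx : (a * b - b * a) * x = -((x : R) * (a * b - b * a)) := by
    rw [hx]
    have e1 : (a * b - b * a) * (a + b) = a * b * a - b * a * b + (a * (b * b) - b * (a * a)) := by
      noncomm_ring
    have e2 : (a + b) * (a * b - b * a) = -(a * b * a) + b * a * b + ((a * a) * b - (b * b) * a) := by
      noncomm_ring
    rw [e1, e2, ha', hb']
    noncomm_ring
  refine ⟨hy2, hyx, ?_⟩
  have hc : Commute (a * b - b * a) ((x : R) * (x : R)) := by
    show _ = _
    calc (a * b - b * a) * ((x : R) * (x : R))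
        = ((a * b - b * a) * x) * x := by rw [mul_assoc]
      _ = -((x : R) * (a * b - b * a)) * x := by rw [hyx]
      _ = -((x : R) * ((a * b - b * a) * x)) := by rw [neg_mul, mul_assoc]
      _ = -((x : R) * -((x : R) * (a * b - b * a))) := by rw [hyx]
      _ = (x : R) * (x : R) * (a * b - b * a) := by rw [mul_neg, neg_neg, mul_assoc]
  have hc4 : Commute (a * b - b * a) ((x ^ 4 : Rˣ) : R) := by
    have : ((x ^ 4 : Rˣ) : R) = ((x : R) * (x : R)) * ((x : R) * (x : R)) := by
      push_cast
      rw [show (4:ℕ) = 2 * 2 by norm_num, pow_mul, pow_two, pow_two]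
    rw [this]
    exact hc.mul_right hc
  have hcinv : Commute (a * b - b * a) (((x ^ 4)⁻¹ : Rˣ) : R) := hc4.units_inv_right
  have hval : ((x ^ 4 : Rˣ) : R) = (x : R) ^ 4 := by push_cast; ring
  refine ⟨⟨a * b - b * a, (((x ^ 4)⁻¹ : Rˣ) : R) * (a * b - b * a), ?_, ?_⟩, rfl, ?_⟩
  · calc (a * b - b * a) * ((((x ^ 4)⁻¹ : Rˣ) : R) * (a * b - b * a))
        = (((x ^ 4)⁻¹ : Rˣ) : R) * ((a * b - b * a) * (a * b - b * a)) := by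
          rw [← mul_assoc, hcinv.eq, mul_assoc]
      _ = 1 := by rw [← pow_two, hy2, ← hval, ← Units.val_mul, inv_mul_cancel]; rfl
  · calc (((x ^ 4)⁻¹ : Rˣ) : R) * (a * b - b * a) * (a * b - b * a)
        = (((x ^ 4)⁻¹ : Rˣ) : R) * ((a * b - b * a) * (a * b - b * a)) := by rw [mul_assoc]
      _ = 1 := by rw [← pow_two, hy2, ← hval, ← Units.val_mul, inv_mul_cancel]; rfl
  · show (a * b - b * a) * (x : R) * ((((x ^ 4)⁻¹ : Rˣ) : R) * (a * b - b * a)) = -(x : R)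
    rw [hyx, neg_mul, mul_assoc ((x:R)), ← mul_assoc (a*b-b*a), hcinv.eq,
      mul_assoc, ← pow_two, hy2, ← hval, ← Units.val_mul, inv_mul_cancel, Units.val_one, mul_one]
end

section
/- Let R be a ring and x an invertible element of R that is a sum of two square-zero elements. Then x is conjugate to −x in R (there exists an invertible y with y x y⁻¹ = −x). -/
theorem conj_neg_of_sum_square_zero {R : Type*} [Ring R] (x : Rˣ)
    (h : ∃ a b : R, a ^ 2 = 0 ∧ b ^ 2 = 0 ∧ (x : R) = a + b) :
    ∃ y : Rˣ, (y : R) * (x : R) * (↑y⁻¹ : R) = -(x : R) := by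
  obtain ⟨a, b, ha, hb, hx⟩ := h
  rw [pow_two] at ha hb
  set u : R := a - b with hu
  have h1 : u * (x : R) = -((x : R) * u) := by
    rw [hx, hu]; noncomm_ring
    rw [ha, hb]; abel
  have h2 : u * u = -((x : R) * (x : R)) := by
    rw [hx, hu]; noncomm_ring
    rw [ha, hb]; abel
  have hxinv : (x : R) * (↑x⁻¹ : R) = 1 := x.mul_inv
  have hinvx : (↑x⁻¹ : R) * (x : R) = 1 := x.inv_mul
  -- u commutes with x * x
  have hcomm : u * ((x : R) * (x : R)) = ((x : R) * (x : R)) * u := by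
    calc u * ((x : R) * (x : R)) = (u * x) * x := by rw [mul_assoc]
      _ = -((x:R) * u) * x := by rw [h1]
      _ = -((x:R) * (u * x)) := by noncomm_ring
      _ = -((x:R) * -((x:R) * u)) := by rw [h1]
      _ = ((x : R) * (x : R)) * u := by noncomm_ring
  set c : R := -((↑x⁻¹ : R) * (↑x⁻¹ : R)) with hc
  have hvc : u * (u * c) = 1 := by
    calc u * (u * c) = (u * u) * c := by rw [mul_assoc]
      _ = ((x:R) * (x:R)) * ((↑x⁻¹:R) * (↑x⁻¹:R)) := by rw [h2, hc]; noncomm_ring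
      _ = (x:R) * ((x:R) * (↑x⁻¹:R)) * (↑x⁻¹:R) := by noncomm_ring
      _ = 1 := by rw [hxinv, mul_one, hxinv]
  have hcu : c * u = u * c := by
    have h3 : (↑x⁻¹:R) * (↑x⁻¹:R) * u = u * ((↑x⁻¹:R) * (↑x⁻¹:R)) := by
      have := congrArg (fun z => (↑x⁻¹:R) * (↑x⁻¹:R) * z * ((↑x⁻¹:R) * (↑x⁻¹:R))) hcomm
      calc (↑x⁻¹:R) * (↑x⁻¹:R) * u
          = (↑x⁻¹:R) * (↑x⁻¹:R) * (u * (((x:R) * (x:R)) * ((↑x⁻¹:R) * (↑x⁻¹:R)))) := by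
            rw [show ((x:R) * (x:R)) * ((↑x⁻¹:R) * (↑x⁻¹:R)) = 1 by
              calc ((x:R) * (x:R)) * ((↑x⁻¹:R) * (↑x⁻¹:R))
                  = (x:R) * ((x:R) * (↑x⁻¹:R)) * (↑x⁻¹:R) := by noncomm_ring
                _ = 1 := by rw [hxinv, mul_one, hxinv]]
            rw [mul_one]
        _ = (↑x⁻¹:R) * (↑x⁻¹:R) * ((((x:R) * (x:R)) * u) * ((↑x⁻¹:R) * (↑x⁻¹:R))) := by
            rw [← mul_assoc u, hcomm, mul_assoc]
        _ = ((↑x⁻¹:R) * (↑x⁻¹:R) * ((x:R) * (x:R))) * (u * ((↑x⁻¹:R) * (↑x⁻¹:R))) := by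
            noncomm_ring
        _ = u * ((↑x⁻¹:R) * (↑x⁻¹:R)) := by
            rw [show (↑x⁻¹:R) * (↑x⁻¹:R) * ((x:R) * (x:R)) = 1 by
              calc (↑x⁻¹:R) * (↑x⁻¹:R) * ((x:R) * (x:R))
                  = (↑x⁻¹:R) * ((↑x⁻¹:R) * (x:R)) * (x:R) := by noncomm_ring
                _ = 1 := by rw [hinvx, mul_one, hinvx]]
            rw [one_mul]
    rw [hc]
    calc -((↑x⁻¹:R) * (↑x⁻¹:R)) * u = -((↑x⁻¹:R) * (↑x⁻¹:R) * u) := by noncomm_ring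
      _ = -(u * ((↑x⁻¹:R) * (↑x⁻¹:R))) := by rw [h3]
      _ = u * -((↑x⁻¹:R) * (↑x⁻¹:R)) := by noncomm_ring
  have hcv : (u * c) * u = 1 := by
    rw [mul_assoc, hcu, hvc]
  refine ⟨⟨u, u * c, hvc, hcv⟩, ?_⟩
  show u * (x : R) * (u * c) = -(x : R)
  rw [h1]
  calc -((x:R) * u) * (u * c) = -((x:R) * (u * (u * c))) := by noncomm_ring
    _ = -(x:R) := by rw [hvc, mul_one]
end

section
/- In the complex algebra A of 3×3 upper triangular matrices with equal diagonal entries (A = ℂ·I₃ + NT₃(ℂ)), the nilpotent Jordan block J (with 1's on the superdiagonal and 0's elsewhere) is a sum of two square-zero elements of A but is not conjugate to −J by any invertible element of A. -/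
def inTriAlg (M : Matrix (Fin 3) (Fin 3) ℂ) : Prop :=
  ∃ (c : ℂ) (N : Matrix (Fin 3) (Fin 3) ℂ),
    (∀ i j : Fin 3, j ≤ i → N i j = 0) ∧ M = c • (1 : Matrix (Fin 3) (Fin 3) ℂ) + N

noncomputable def Jmat : Matrix (Fin 3) (Fin 3) ℂ :=
  Matrix.of ![![0, 1, 0], ![0, 0, 1], ![0, 0, 0]]

theorem J_sum_square_zero_not_conj_neg :
    (∃ a b : Matrix (Fin 3) (Fin 3) ℂ, inTriAlg a ∧ inTriAlg b ∧
      a ^ 2 = 0 ∧ b ^ 2 = 0 ∧ Jmat = a + b) ∧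
    ¬ ∃ P : Matrix (Fin 3) (Fin 3) ℂ, inTriAlg P ∧ IsUnit P ∧
      P * Jmat * P⁻¹ = -Jmat := by
  constructor
  · refine ⟨Matrix.of ![![0, 1, 0], ![0, 0, 0], ![0, 0, 0]],
      Matrix.of ![![0, 0, 0], ![0, 0, 1], ![0, 0, 0]], ?_, ?_, ?_, ?_, ?_⟩
    · exact ⟨0, Matrix.of ![![0, 1, 0], ![0, 0, 0], ![0, 0, 0]],
        by intro i j hij; fin_cases i <;> fin_cases j <;> simp_all [Fin.le_def, Matrix.vecHead, Matrix.vecTail],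
        by simp⟩
    · exact ⟨0, Matrix.of ![![0, 0, 0], ![0, 0, 1], ![0, 0, 0]],
        by intro i j hij; fin_cases i <;> fin_cases j <;> simp_all [Fin.le_def, Matrix.vecHead, Matrix.vecTail],
        by simp⟩
    · ext i j
      fin_cases i <;> fin_cases j <;>
        simp [pow_two, Matrix.mul_apply, Fin.sum_univ_three, Matrix.vecHead, Matrix.vecTail]
    · ext i j
      fin_cases i <;> fin_cases j <;>
        simp [pow_two, Matrix.mul_apply, Fin.sum_univ_three, Matrix.vecHead, Matrix.vecTail]
    · ext i j
      fin_cases i <;> fin_cases j <;> simp [Jmat, Matrix.vecHead, Matrix.vecTail]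
  · rintro ⟨P, ⟨c, N, hN, rfl⟩, hu, h⟩
    have hdet : IsUnit (c • (1 : Matrix (Fin 3) (Fin 3) ℂ) + N).det :=
      (Matrix.isUnit_iff_isUnit_det _).mp hu
    have h2 : (c • (1 : Matrix (Fin 3) (Fin 3) ℂ) + N) * Jmat
        = -Jmat * (c • (1 : Matrix (Fin 3) (Fin 3) ℂ) + N) := by
      have := congrArg (fun M => M * (c • (1 : Matrix (Fin 3) (Fin 3) ℂ) + N)) h
      simpa [Matrix.mul_assoc, Matrix.nonsing_inv_mul _ hdet] using this
    have hc : c = 0 := by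
      have := congrArg (fun M => M 0 1) h2
      simp [Matrix.mul_apply, Fin.sum_univ_three, Jmat, Matrix.one_apply,
        hN 0 0 (le_refl 0), hN 1 1 (le_refl 1), Matrix.vecHead, Matrix.vecTail] at this
      linear_combination (1/2 : ℂ) * this
    have hdet0 : (c • (1 : Matrix (Fin 3) (Fin 3) ℂ) + N).det = 0 := by
      subst hc
      simp [Matrix.det_fin_three, hN 0 0 (by decide), hN 1 0 (by decide),
        hN 1 1 (by decide), hN 2 0 (by decide), hN 2 1 (by decide), hN 2 2 (by decide)]
    rw [hdet0] at hdet
    exact hdet.ne_zero rfl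
end

section
/- Let (A, ⋆) be a finite-dimensional algebra with F-linear involution over an algebraically closed field F of characteristic ≠ 2, and let x be unitary (x⋆ x = 1). If x is conjugate to x⁻¹ by an invertible element of A, then x is conjugate to x⁻¹ by a unitary element of A. -/
/-!
Put `w = z⋆ z`. Applying `⋆` to `z x z⁻¹ = x⁻¹` and using `x⋆ = x⁻¹` shows that `w` commutes
with `x`; it is also invertible and self-adjoint. Over an algebraically closed field of
characteristic `≠ 2` an invertible `w` has a square root `k = q(w)` that is a polynomial in `w`,
so `k` is invertible, self-adjoint and commutes with `x`. Then `z k⁻¹` is unitary, since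
`(z k⁻¹)⋆ z k⁻¹ = k⁻¹ w k⁻¹ = 1`, and it still conjugates `x` to `x⁻¹`.
-/

open Polynomial

section AlgClosed

variable {K : Type*} [Field K] [IsAlgClosed K]

theorem AdjoinRoot.isNilpotent_mk_of_forall_isRoot {m p : K[X]} (hm : m ≠ 0)
    (h : ∀ a, m.IsRoot a → p.IsRoot a) : IsNilpotent (AdjoinRoot.mk m p) := by
  classical
  rcases eq_or_ne p 0 with rfl | hp
  · simp
  refine ⟨m.natDegree, ?_⟩
  rw [← map_pow, AdjoinRoot.mk_eq_zero, IsAlgClosed.dvd_iff_roots_le_roots hm (pow_ne_zero _ hp),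
    roots_pow, Multiset.le_iff_count]
  intro a
  by_cases ha : a ∈ m.roots
  · have hpa : 1 ≤ p.roots.count a :=
      Multiset.one_le_count_iff_mem.mpr ((mem_roots hp).mpr (h a (isRoot_of_mem_roots ha)))
    calc m.roots.count a ≤ m.natDegree := (Multiset.count_le_card a _).trans (card_roots' m)
      _ ≤ m.natDegree * p.roots.count a := Nat.le_mul_of_pos_right _ hpa
      _ = (m.natDegree • p.roots).count a := (Multiset.count_nsmul ..).symm
  · simp [Multiset.count_eq_zero_of_notMem ha]

/-- Interpolating square roots of the roots of `m` gives a square root of `X` modulo the radical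
of `m`; Newton's method in `K[X] ⧸ (m)` lifts it to one modulo `m`. -/
theorem Polynomial.exists_dvd_sq_sub_X (h2 : (2 : K) ≠ 0) {m : K[X]} (hm : m ≠ 0) (h0 : ¬ m.IsRoot 0) :
    ∃ q : K[X], m ∣ q ^ 2 - X := by
  classical
  choose c hc using fun a : K => IsAlgClosed.exists_pow_nat_eq a two_pos
  set q₀ := Lagrange.interpolate m.roots.toFinset id c
  have hq₀ : ∀ a, m.IsRoot a → q₀.eval a ^ 2 = a := fun a ha => by
    rw [show q₀.eval a = c a from Lagrange.eval_interpolate_at_node (v := id) c (Set.injOn_id _)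
      (by simpa [hm] using ha), hc]
  set x := AdjoinRoot.mk m q₀
  set P : (AdjoinRoot m)[X] := X ^ 2 - C (AdjoinRoot.root m)
  have hP : IsNilpotent (aeval x P) := by
    convert AdjoinRoot.isNilpotent_mk_of_forall_isRoot hm (p := q₀ ^ 2 - X) fun a ha => by
      simp [hq₀ a ha]
    simp [P, x]
  have hP' : IsUnit (aeval x (derivative P)) := by
    have hcop : IsCoprime q₀ m := by
      refine (isCoprime_iff_aeval_ne_zero_of_isAlgClosed K K q₀ m).mpr fun a => ?_
      by_cases ha : m.IsRoot a
      · refine .inl fun hqa => h0 ?_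
        have ha0 : a = 0 := by rw [← hq₀ a ha, ← coe_aeval_eq_eval, hqa, zero_pow two_ne_zero]
        exact ha0 ▸ ha
      · exact .inr ha
    obtain ⟨u, v, huv⟩ := hcop
    have hx : AdjoinRoot.mk m u * x = 1 := by
      simpa [x] using congrArg (AdjoinRoot.mk m) huv
    have h2' : IsUnit (2 : AdjoinRoot m) := by
      simpa only [map_ofNat] using (isUnit_iff_ne_zero.mpr h2).map (algebraMap K (AdjoinRoot m))
    have hder : aeval x (derivative P) = 2 * x := by simp [P, one_add_one_eq_two]
    exact hder ▸ h2'.mul (IsUnit.of_mul_eq_one_right _ hx)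
  obtain ⟨r, -, hr⟩ := (existsUnique_nilpotent_sub_and_aeval_eq_zero hP hP').exists
  obtain ⟨q, rfl⟩ := AdjoinRoot.mk_surjective r
  refine ⟨q, AdjoinRoot.mk_eq_zero.mp ?_⟩
  simpa [P] using hr

end AlgClosed

theorem minpoly.not_isRoot_zero_of_isUnit {F A : Type*} [Field F] [Ring A] [Algebra F A] {w : A}
    (hint : IsIntegral F w) (hw : IsUnit w) : ¬ (minpoly F w).IsRoot 0 := by
  intro h0
  obtain ⟨g, hg⟩ : X ∣ minpoly F w := by rwa [X_dvd_iff, coeff_zero_eq_eval_zero]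
  have hg0 : g ≠ 0 := by rintro rfl; exact minpoly.ne_zero hint (by simpa using hg)
  have hdvd : X * g ∣ 1 * g := by
    rw [← hg, one_mul]
    refine minpoly.dvd F w (hw.mul_right_eq_zero.mp ?_)
    simpa [hg] using minpoly.aeval F w
  exact not_isUnit_X (isUnit_of_dvd_one ((mul_dvd_mul_iff_right hg0).mp hdvd))

theorem exists_aeval_sq_eq_of_isUnit {F A : Type*} [Field F] [IsAlgClosed F] [Ring A] [Algebra F A]
    (h2 : (2 : F) ≠ 0) {w : A} (hint : IsIntegral F w) (hw : IsUnit w) :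
    ∃ q : F[X], aeval w q ^ 2 = w := by
  obtain ⟨q, hq⟩ := exists_dvd_sq_sub_X h2 (minpoly.ne_zero hint)
    (minpoly.not_isRoot_zero_of_isUnit hint hw)
  exact ⟨q, by simpa [sub_eq_zero] using minpoly.dvd_iff.mp hq⟩

theorem Commute.aeval_right {F A : Type*} [CommSemiring F] [Semiring A] [Algebra F A] {x w : A}
    (h : Commute x w) (p : F[X]) : Commute x (aeval w p) := by
  induction p using Polynomial.induction_on with
  | C a => rw [aeval_C]; exact Algebra.commute_algebraMap_right a x
  | add p q hp hq => rw [map_add]; exact hp.add_right hq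
  | monomial n a ih => rw [pow_succ, ← mul_assoc, map_mul, aeval_X]; exact ih.mul_right h

theorem map_one_of_surjective_of_map_mul_rev {M : Type*} [MulOneClass M] {s : M → M}
    (hs : Function.Surjective s) (hmul : ∀ a b, s (a * b) = s b * s a) : s 1 = 1 := by
  obtain ⟨a, ha⟩ := hs 1
  calc s 1 = s 1 * s a := by rw [ha, mul_one]
    _ = 1 := by rw [← hmul, mul_one, ha]

section AntiMultiplicative

variable {F A : Type*} [CommSemiring F] [Semiring A] [Algebra F A] {s : A →ₗ[F] A}

theorem map_units_inv_mul (hmul : ∀ a b, s (a * b) = s b * s a) (hone : s 1 = 1) (u : Aˣ) :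
    s ↑u⁻¹ * s u = 1 := by
  rw [← hmul, u.mul_inv, hone]

theorem isUnit_map_units (hmul : ∀ a b, s (a * b) = s b * s a) (hone : s 1 = 1) (u : Aˣ) :
    IsUnit (s u) :=
  ⟨⟨s u, s ↑u⁻¹, by rw [← hmul, u.inv_mul, hone], map_units_inv_mul hmul hone u⟩, rfl⟩

theorem map_aeval_of_map_eq_self (hmul : ∀ a b, s (a * b) = s b * s a) (hone : s 1 = 1)
    {w : A} (hw : s w = w) (p : F[X]) : s (aeval w p) = aeval w p := by
  induction p using Polynomial.induction_on with
  | C a => rw [aeval_C, Algebra.algebraMap_eq_smul_one, map_smul, hone]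
  | add p q hp hq => rw [map_add, map_add, hp, hq]
  | monomial n a ih =>
    rw [pow_succ, ← mul_assoc, map_mul, aeval_X, hmul, hw, ih, ((Commute.refl w).aeval_right _).eq]

theorem commute_map_mul_self_of_conj (hmul : ∀ a b, s (a * b) = s b * s a)
    (hinv : ∀ a, s (s a) = a) {x z : Aˣ} (hx : s x * x = 1) (hz : (z : A) * x * ↑z⁻¹ = ↑x⁻¹) :
    Commute (x : A) (s z * z) := by
  have hsx : s x = ↑x⁻¹ := Units.mul_eq_one_iff_eq_inv.mp hx
  have hsx' : s ↑x⁻¹ = x := by rw [← hsx, hinv]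
  have hzx : (z : A) * x = ↑x⁻¹ * z := by rw [← hz, Units.inv_mul_cancel_right]
  have hszx : (x : A) * s z = s z * ↑x⁻¹ := by
    have := congrArg s hzx
    rw [hmul, hmul, hsx, hsx'] at this
    rw [Units.eq_mul_inv_iff_mul_eq, mul_assoc, eq_comm, ← Units.inv_mul_eq_iff_eq_mul, this]
  calc (x : A) * (s z * z) = s z * (↑x⁻¹ * z) := by rw [← mul_assoc, hszx, mul_assoc]
    _ = s z * z * x := by rw [← hzx, mul_assoc]

theorem map_mul_inv_mul_self (hmul : ∀ a b, s (a * b) = s b * s a) (hone : s 1 = 1) {z k : Aˣ}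
    (hk : s k = k) (hzk : s z * z = k * k) : s ↑(z * k⁻¹) * ↑(z * k⁻¹) = 1 := by
  have hsk : s ↑k⁻¹ = ↑k⁻¹ := Units.mul_eq_one_iff_eq_inv.mp (hk ▸ map_units_inv_mul hmul hone k)
  calc s ↑(z * k⁻¹) * ↑(z * k⁻¹) = ↑k⁻¹ * (s z * z) * ↑k⁻¹ := by
        rw [Units.val_mul, hmul, hsk]; simp only [mul_assoc]
    _ = 1 := by rw [hzk, ← mul_assoc, Units.inv_mul, one_mul, Units.mul_inv]

end AntiMultiplicative

theorem unitary_conj_of_conj {F : Type*} [Field F] [IsAlgClosed F] (h2 : (2 : F) ≠ 0)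
    {A : Type*} [Ring A] [Algebra F A] [FiniteDimensional F A]
    (s : A →ₗ[F] A) (hmul : ∀ a b : A, s (a * b) = s b * s a) (hinv : ∀ a : A, s (s a) = a)
    (x : Aˣ) (hx : s (x : A) * (x : A) = 1)
    (h : ∃ z : Aˣ, (z : A) * (x : A) * (↑z⁻¹ : A) = (↑x⁻¹ : A)) :
    ∃ z : Aˣ, s (z : A) * (z : A) = 1 ∧ (z : A) * (x : A) * (↑z⁻¹ : A) = (↑x⁻¹ : A) := by
  obtain ⟨z, hz⟩ := h
  have hone : s 1 = 1 := map_one_of_surjective_of_map_mul_rev (fun a => ⟨s a, hinv a⟩) hmul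
  set w := s z * z
  have hw : IsUnit w := (isUnit_map_units hmul hone z).mul z.isUnit
  obtain ⟨q, hq⟩ := exists_aeval_sq_eq_of_isUnit h2 (.of_finite F w) hw
  obtain ⟨k, hk⟩ : IsUnit (aeval w q) := (isUnit_pow_iff two_ne_zero).mp (by rwa [hq])
  have hsk : s k = k := hk ▸ map_aeval_of_map_eq_self hmul hone (by rw [hmul, hinv]) q
  have hxk : Commute (x : A) k :=
    hk ▸ (commute_map_mul_self_of_conj hmul hinv hx hz).aeval_right q
  refine ⟨z * k⁻¹, map_mul_inv_mul_self hmul hone hsk (by rw [← sq, hk, hq]), ?_⟩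
  have hkx : (↑k⁻¹ : A) * x * k = x := by rw [mul_assoc, Units.inv_mul_eq_iff_eq_mul, hxk.eq]
  calc (↑(z * k⁻¹) : A) * x * ↑(z * k⁻¹)⁻¹ = z * (↑k⁻¹ * x * k) * ↑z⁻¹ := by
        simp only [mul_inv_rev, inv_inv, Units.val_mul, mul_assoc]
    _ = ↑x⁻¹ := by rw [hkx, hz]
end

section
/- Let (A, ⋆) be a finite-dimensional algebra with F-linear involution over an algebraically closed field F with char F ≠ 2, and let x ∈ U(A) be conjugate to x⁻¹ in A. Then there exists y ∈ U(A) with y x y⁻¹ = x⁻¹ and y⁴ = 1. -/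
/-!
Rescale the given conjugator `z` by a self-adjoint square root `c` of the self-adjoint unit
`z z⋆`, which commutes with `x`: then `y = c⁻¹ z` is unitary and still inverts `x`. Its square
`u = y²` is unitary and commutes with `x` and `y`. Take `v` with `v² = u` in `F[u]`; then
`e = v⋆ v` is self-adjoint with `e² = 1`, and for a self-adjoint square root `g` of `e` in `F[e]`
the unitary `w = v g` commutes with `x` and `y` and satisfies `w⁴ = u²`. Hence `y w⁻¹` is a
unitary element inverting `x` whose fourth power is `1`.

Units of a finite-dimensional algebra have square roots that are polynomials in them: modulo
nilpotents a finite-dimensional commutative `F`-algebra is a product of copies of `F`, and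
since `2` is invertible Newton's iteration lifts square roots through nilpotents.
-/

open Polynomial

section Group

variable {G : Type*} [Group G]

theorem commute_mul_of_conj_eq_inv {a b x : G} (ha : a * x * a⁻¹ = x⁻¹)
    (hb : b * x * b⁻¹ = x⁻¹) : Commute (a * b) x := by
  refine mul_inv_eq_iff_eq_mul.mp ?_
  calc a * b * x * (a * b)⁻¹ = a * (b * x * b⁻¹) * a⁻¹ := by group
    _ = (a * x * a⁻¹)⁻¹ := by rw [hb]; group
    _ = x := by rw [ha, inv_inv]

theorem conj_eq_inv_mul_left {w x z : G} (hw : Commute w x) (hz : z * x * z⁻¹ = x⁻¹) :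
    w * z * x * (w * z)⁻¹ = x⁻¹ := by
  calc w * z * x * (w * z)⁻¹ = w * (z * x * z⁻¹) * w⁻¹ := by group
    _ = x⁻¹ := by rw [hz, hw.inv_right.eq, mul_inv_cancel_right]

theorem conj_eq_inv_mul_right {w x z : G} (hw : Commute w x) (hz : z * x * z⁻¹ = x⁻¹) :
    z * w * x * (z * w)⁻¹ = x⁻¹ := by
  calc z * w * x * (z * w)⁻¹ = z * (w * x * w⁻¹) * z⁻¹ := by group
    _ = x⁻¹ := by rw [hw.eq, mul_inv_cancel_right, hz]

theorem mul_inv_pow_four_eq_one {w y : G} (hwy : Commute w y) (hw4 : w ^ 4 = (y ^ 2) ^ 2) :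
    (y * w⁻¹) ^ 4 = 1 := by
  rw [(hwy.inv_left.symm).mul_pow, inv_pow, hw4, ← pow_mul, mul_inv_cancel]

variable [StarMul G]

theorem star_conj_eq_inv {x z : G} (hx : star x = x⁻¹) (hz : z * x * z⁻¹ = x⁻¹) :
    star z * x * (star z)⁻¹ = x⁻¹ := by
  have h := congrArg (fun g => (star g)⁻¹) hz
  simp only [star_mul, star_inv, hx, inv_inv, mul_inv_rev] at h
  calc star z * x * (star z)⁻¹ = (star z * x⁻¹ * (star z)⁻¹)⁻¹ := by group
    _ = (star z * ((star z)⁻¹ * x * star z) * (star z)⁻¹)⁻¹ := by rw [h]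
    _ = x⁻¹ := by group

theorem star_mul_eq_inv {a b : G} (ha : star a = a⁻¹) (hb : star b = b⁻¹) :
    star (a * b) = (a * b)⁻¹ := by
  rw [star_mul, ha, hb, mul_inv_rev]

theorem star_inv_mul_eq_inv {c z : G} (hc : star c = c) (hc2 : c ^ 2 = z * star z) :
    star (c⁻¹ * z) = (c⁻¹ * z)⁻¹ := by
  rw [star_mul, star_inv, hc, mul_inv_rev, inv_inv, eq_inv_mul_iff_mul_eq, ← mul_assoc, ← hc2]
  group

end Group

theorem exists_sq_eq_of_isNilpotent_sq_sub {R : Type*} [CommRing R] (h2 : IsUnit (2 : R))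
    {a w : R} (ha : IsUnit a) (hw : IsNilpotent (w ^ 2 - a)) : ∃ c, c ^ 2 = a := by
  have hwu : IsUnit w := by
    have : IsUnit (a + (w ^ 2 - a)) := hw.isUnit_add_left_of_commute ha (Commute.all _ _)
    rwa [add_sub_cancel, isUnit_pow_iff two_ne_zero] at this
  obtain ⟨c, -, hc⟩ := existsUnique_nilpotent_sub_and_aeval_eq_zero (P := X ^ 2 - C a) (x := w)
    (by simpa [Algebra.algebraMap_self] using hw)
    (by simpa [derivative_X_pow, one_add_one_eq_two] using h2.mul hwu) |>.exists
  exact ⟨c, by simpa [sub_eq_zero] using hc⟩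

theorem exists_isNilpotent_sq_sub {F R : Type*} [Field F] [IsAlgClosed F] [CommRing R]
    [Algebra F R] [FiniteDimensional F R] (a : R) : ∃ w : R, IsNilpotent (w ^ 2 - a) := by
  have := IsArtinianRing.of_finite F R
  have hroot (I : MaximalSpectrum R) : ∃ μ : R ⧸ I.asIdeal, μ ^ 2 = Ideal.Quotient.mk _ a := by
    have := I.isMaximal
    let := Ideal.Quotient.field I.asIdeal
    obtain ⟨f, hf⟩ := (IsAlgClosed.algebraMap_bijective_of_isIntegral (k := F)).2
      (Ideal.Quotient.mk I.asIdeal a)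
    obtain ⟨μ, hμ⟩ := IsAlgClosed.exists_pow_nat_eq f two_pos
    exact ⟨algebraMap F _ μ, by rw [← map_pow, hμ, hf]⟩
  choose μ hμ using hroot
  let e := IsArtinianRing.quotNilradicalEquivPi R
  obtain ⟨w, hw⟩ := Ideal.Quotient.mk_surjective (e.symm μ)
  refine ⟨w, (mem_nilradical).mp (Ideal.Quotient.eq.mp (e.injective ?_))⟩
  ext I
  calc e (Ideal.Quotient.mk _ (w ^ 2)) I = μ I ^ 2 := by
        rw [map_pow, map_pow, hw, e.apply_symm_apply, Pi.pow_apply]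
    _ = e (algebraMap R _ a) I := by rw [e.commutes, hμ]; rfl

theorem exists_sq_eq_of_isUnit {F R : Type*} [Field F] [IsAlgClosed F] (h2 : (2 : F) ≠ 0)
    [CommRing R] [Algebra F R] [FiniteDimensional F R] {a : R} (ha : IsUnit a) :
    ∃ c, c ^ 2 = a := by
  obtain ⟨w, hw⟩ := exists_isNilpotent_sq_sub (F := F) a
  have h2R : IsUnit (2 : R) := by
    rw [← map_ofNat (algebraMap F R) 2]
    exact (isUnit_iff_ne_zero.mpr h2).map _
  exact exists_sq_eq_of_isNilpotent_sq_sub h2R ha hw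

theorem exists_aeval_sq_eq {F A : Type*} [Field F] [IsAlgClosed F] (h2 : (2 : F) ≠ 0)
    [Ring A] [Algebra F A] [FiniteDimensional F A] {r : A} (hr : IsUnit r) :
    ∃ q : F[X], aeval r q ^ 2 = r := by
  let φ := Ideal.kerLiftAlg (aeval (R := F) r)
  have hφ : Function.Injective φ := Ideal.kerLiftAlg_injective _
  have := Module.Finite.of_injective φ.toLinearMap hφ
  have := IsArtinianRing.of_finite F (F[X] ⧸ RingHom.ker (aeval (R := F) r))
  have hX : IsUnit (Ideal.Quotient.mk (RingHom.ker (aeval (R := F) r)) X) :=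
    IsArtinianRing.isUnit_of_mem_nonZeroDivisors <| mem_nonZeroDivisors_of_injective hφ <| by
      simpa [φ] using hr.mem_nonZeroDivisors
  obtain ⟨c, hc⟩ := exists_sq_eq_of_isUnit h2 hX
  obtain ⟨q, rfl⟩ := Ideal.Quotient.mk_surjective c
  exact ⟨q, by simpa [φ] using congrArg φ hc⟩

theorem star_aeval {F A : Type*} [CommSemiring F] [StarRing F] [TrivialStar F] [Semiring A]
    [StarRing A] [Algebra F A] [StarModule F A] (a : A) (q : F[X]) :
    star (aeval a q) = aeval (star a) q := by
  induction q using Polynomial.induction_on' with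
  | add p q hp hq => rw [map_add, star_add, hp, hq, map_add]
  | monomial n c =>
    rw [aeval_monomial, aeval_monomial, star_mul, star_pow, ← algebraMap_star_comm, star_trivial c,
      Algebra.commutes]

theorem Units.commute_of_val_eq_aeval {F A : Type*} [CommSemiring F] [Semiring A] [Algebra F A]
    {r c t : Aˣ} {q : F[X]} (hc : (c : A) = aeval (r : A) q) (h : Commute r t) : Commute c t :=
  Commute.units_val_iff.mp <| hc ▸ (Algebra.commute_of_mem_adjoin_singleton_of_commute
    (aeval_mem_adjoin_singleton F _) (Commute.units_val_iff.mpr h).symm).symm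

section Sqrt

variable {F A : Type*} [Field F] [IsAlgClosed F] [Ring A] [Algebra F A] [FiniteDimensional F A]

theorem Units.exists_sq_eq_aeval (h2 : (2 : F) ≠ 0) (r : Aˣ) :
    ∃ (q : F[X]) (c : Aˣ), (c : A) = aeval (r : A) q ∧ c ^ 2 = r := by
  obtain ⟨q, hq⟩ := exists_aeval_sq_eq h2 r.isUnit
  have hunit : IsUnit (aeval (r : A) q) :=
    (isUnit_pow_iff two_ne_zero).mp (by rw [hq]; exact r.isUnit)
  exact ⟨q, hunit.unit, rfl, Units.ext (by simpa using hq)⟩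

variable [StarRing F] [TrivialStar F] [StarRing A] [StarModule F A]

theorem Units.exists_selfAdjoint_sqrt (h2 : (2 : F) ≠ 0) (b : Aˣ) (hb : star b = b) :
    ∃ c : Aˣ, star c = c ∧ c ^ 2 = b ∧ ∀ t : Aˣ, Commute b t → Commute c t := by
  obtain ⟨q, c, hc, hc2⟩ := Units.exists_sq_eq_aeval h2 b
  refine ⟨c, Units.ext ?_, hc2, fun t ht => Units.commute_of_val_eq_aeval hc ht⟩
  rw [Units.coe_star, hc, star_aeval, ← Units.coe_star, hb]

theorem Units.exists_unitary_pow_four_eq_sq (h2 : (2 : F) ≠ 0) (u : Aˣ) (hu : star u = u⁻¹) :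
    ∃ w : Aˣ, star w = w⁻¹ ∧ w ^ 4 = u ^ 2 ∧ ∀ t : Aˣ, Commute u t → Commute w t := by
  obtain ⟨q, v, hv, hv2⟩ := Units.exists_sq_eq_aeval h2 u
  have hsv : ((star v : Aˣ) : A) = aeval ((u⁻¹ : Aˣ) : A) q := by
    rw [Units.coe_star, hv, star_aeval, ← Units.coe_star, hu]
  have hv_comm (t : Aˣ) (ht : Commute u t) : Commute v t ∧ Commute (star v) t :=
    ⟨Units.commute_of_val_eq_aeval hv ht, Units.commute_of_val_eq_aeval hsv ht.inv_left⟩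
  have huv : Commute u v := hv2 ▸ (Commute.self_pow v 2).symm
  have hsvv : Commute (star v) v := (hv_comm v huv).2
  set e := star v * v with he_def
  have he : star e = e := by rw [star_mul, star_star]
  have he2 : e ^ 2 = 1 := by
    rw [hsvv.mul_pow, ← star_pow, hv2, hu, inv_mul_cancel]
  have he_comm (t : Aˣ) (ht : Commute u t) : Commute e t :=
    (hv_comm t ht).2.mul_left (hv_comm t ht).1
  obtain ⟨g, hg, hg2, hg_comm⟩ := Units.exists_selfAdjoint_sqrt h2 e he
  have hge : Commute g e := hg_comm e (Commute.refl e)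
  have hgv : Commute v g := (hg_comm v (he_comm v huv)).symm
  refine ⟨v * g, eq_inv_of_mul_eq_one_left ?_, ?_,
    fun t ht => (hv_comm t ht).1.mul_left (hg_comm t (he_comm t ht))⟩
  · calc star (v * g) * (v * g) = g * e * g := by rw [star_mul, hg, he_def]; group
      _ = e ^ 2 := by rw [hge.eq, mul_assoc, ← sq, hg2, sq]
      _ = 1 := he2
  · rw [hgv.mul_pow, show 4 = 2 * 2 from rfl, pow_mul, pow_mul, hv2, hg2, he2, mul_one]

end Sqrt

theorem unitary_conj_order_four {F : Type*} [Field F] [IsAlgClosed F] (h2 : (2 : F) ≠ 0)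
    {A : Type*} [Ring A] [Algebra F A] [FiniteDimensional F A]
    (s : A →ₗ[F] A) (hmul : ∀ a b : A, s (a * b) = s b * s a) (hinv : ∀ a : A, s (s a) = a)
    (x : Aˣ) (hx : s (x : A) * (x : A) = 1)
    (h : ∃ z : Aˣ, (z : A) * (x : A) * (↑z⁻¹ : A) = (↑x⁻¹ : A)) :
    ∃ y : Aˣ, s (y : A) * (y : A) = 1 ∧ (y : A) * (x : A) * (↑y⁻¹ : A) = (↑x⁻¹ : A) ∧
      y ^ 4 = 1 := by
  let _ : StarRing F := starRingOfComm
  have _ : TrivialStar F := ⟨fun _ => rfl⟩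
  let _ : StarRing A :=
    { star := s, star_involutive := hinv, star_mul := hmul, star_add := map_add s }
  have _ : StarModule F A := ⟨map_smul s⟩
  obtain ⟨z, hz⟩ := h
  have hxu : star x = x⁻¹ := eq_inv_of_mul_eq_one_left (Units.ext hx)
  have hzx : z * x * z⁻¹ = x⁻¹ := Units.ext (by simpa using hz)
  obtain ⟨c, hc, hc2, hc_comm⟩ :=
    Units.exists_selfAdjoint_sqrt h2 (z * star z) (by rw [star_mul, star_star])
  set y := c⁻¹ * z
  have hy : star y = y⁻¹ := star_inv_mul_eq_inv hc hc2
  have hcx : Commute c x := hc_comm x (commute_mul_of_conj_eq_inv hzx (star_conj_eq_inv hxu hzx))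
  have hyx : y * x * y⁻¹ = x⁻¹ := conj_eq_inv_mul_left hcx.inv_left hzx
  obtain ⟨w, hw, hw4, hw_comm⟩ :=
    Units.exists_unitary_pow_four_eq_sq h2 (y ^ 2) (by rw [star_pow, hy, inv_pow])
  refine ⟨y * w⁻¹, ?_, ?_, mul_inv_pow_four_eq_one (hw_comm y (Commute.self_pow y 2).symm) hw4⟩
  · have hY : star (y * w⁻¹) * (y * w⁻¹) = 1 := by
      rw [star_mul_eq_inv hy (by rw [star_inv, hw]), inv_mul_cancel]
    exact congrArg Units.val hY
  · have hy2x : Commute (y ^ 2) x := by rw [sq]; exact commute_mul_of_conj_eq_inv hyx hyx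
    exact congrArg Units.val (conj_eq_inv_mul_right (hw_comm x hy2x).inv_left hyx)
end

section
/- Let (A, ⋆) be a finite-dimensional algebra with F-linear involution over an algebraically closed field F with char F ≠ 2. Every element x ∈ U(A) that is conjugate to x⁻¹ in A splits as a product x = y z with y, z ∈ U(A) satisfying y⁴ = z⁴ = 1. -/
/-!
Install `⋆` as a star structure on `A` (with the trivial star on `F`), so that `U(A)` becomes the
unitary group. Square roots of units exist in every commutative subalgebra `F[a]`: modulo its
nilradical `F[a]` is a product of copies of `F`, where every element is a square, and Newton's
iteration lifts such an approximate root.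

If `g x g⁻¹ = x⁻¹`, then `g⋆g` commutes with `x`, and the unitary factor `y₀ = g c` of the polar
decomposition of `g`, with `c ∈ F[(g⋆g)⁻¹]` a square root of `(g⋆g)⁻¹`, still inverts `x`. Inside
the commutative `⋆`-closed algebra `F[y₀²]` there is a unitary `w` with `w⁴ = y₀⁻⁴`, so `y = y₀ w`
inverts `x` and `y⁴ = 1`. Finally `z = y⁻¹ x` satisfies `z² = y⁻²`, hence `z⁴ = 1`.
-/

open Polynomial
open scoped IsMulCommutative

section Group

variable {G : Type*} [Group G]

theorem conj_inv_eq_of_conj_eq_inv {x y : G} (h : y * x * y⁻¹ = x⁻¹) : y * x⁻¹ * y⁻¹ = x := by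
  simpa [mul_assoc] using congrArg (·⁻¹) h

theorem commute_sq_of_conj_eq_inv {x y : G} (h : y * x * y⁻¹ = x⁻¹) : Commute (y ^ 2) x := by
  have hy : y * x = x⁻¹ * y := mul_inv_eq_iff_eq_mul.mp h
  have hy' : y * x⁻¹ = x * y := mul_inv_eq_iff_eq_mul.mp (conj_inv_eq_of_conj_eq_inv h)
  show y ^ 2 * x = x * y ^ 2
  rw [sq, mul_assoc, hy, ← mul_assoc, hy', mul_assoc]

theorem conj_mul_eq_inv_of_commute {x y w : G} (h : y * x * y⁻¹ = x⁻¹) (hw : Commute w x) :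
    y * w * x * (y * w)⁻¹ = x⁻¹ := by
  rw [← h, mul_inv_rev, mul_assoc y w, hw.eq]
  group

theorem pow_four_inv_mul_eq_one {x y : G} (h : y * x * y⁻¹ = x⁻¹) (hy : y ^ 4 = 1) :
    (y⁻¹ * x) ^ 4 = 1 := by
  have hsq : (y⁻¹ * x) ^ 2 = y⁻¹ ^ 2 := by
    have : x * y⁻¹ = y⁻¹ * x⁻¹ := by rw [← h]; group
    rw [sq, sq, mul_assoc, ← mul_assoc x, this]
    group
  rw [show 4 = 2 * 2 from rfl, pow_mul, hsq, ← pow_mul, inv_pow, hy, inv_one]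

variable [StarMul G]

theorem mem_unitary_of_star_mul_self_eq_one {g : G} (h : star g * g = 1) : g ∈ unitary G :=
  Unitary.mem_iff.mpr ⟨h, by rw [eq_inv_of_mul_eq_one_left h, mul_inv_cancel]⟩

theorem commute_star_mul_self_of_conj_eq_inv {g x : G} (hx : x ∈ unitary G)
    (hg : g * x * g⁻¹ = x⁻¹) : Commute (star g * g) x := by
  have hstar : star x = x⁻¹ := eq_inv_of_mul_eq_one_left (Unitary.star_mul_self_of_mem hx)
  have h₁ : g * x = x⁻¹ * g := mul_inv_eq_iff_eq_mul.mp hg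
  have h₂ : x * star g = star g * x⁻¹ := by
    have : g * x⁻¹ = x * g := mul_inv_eq_iff_eq_mul.mp (conj_inv_eq_of_conj_eq_inv hg)
    simpa [star_inv, hstar] using congrArg star this
  show star g * g * x = x * (star g * g)
  rw [mul_assoc, h₁, ← mul_assoc, ← h₂, mul_assoc]

theorem mul_mem_unitary_of_mul_self_eq_inv {g c : G} (hc : IsSelfAdjoint c)
    (hcomm : Commute c (star g * g)) (hcc : c * c = (star g * g)⁻¹) : g * c ∈ unitary G := by
  refine mem_unitary_of_star_mul_self_eq_one ?_
  calc star (g * c) * (g * c) = c * (star g * g) * c := by rw [star_mul, hc.star_eq]; group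
    _ = star g * g * (c * c) := by rw [hcomm.eq, mul_assoc]
    _ = 1 := by rw [hcc, mul_inv_cancel]

end Group

theorem isSquare_of_isNilpotent_mul_self_sub {R : Type*} [CommRing R] (h2 : IsUnit (2 : R))
    {u x : R} (hu : IsUnit u) (hx : IsNilpotent (x * x - u)) : IsSquare u := by
  have hx_unit : IsUnit x :=
    isUnit_mul_self_iff.mp (by simpa using hx.isUnit_add_left_of_commute hu (Commute.all _ _))
  obtain ⟨r, ⟨-, hr⟩, -⟩ := existsUnique_nilpotent_sub_and_aeval_eq_zero (P := X ^ 2 - C u)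
    (x := x) (by simpa [sq] using hx) (by simpa [one_add_one_eq_two] using h2.mul hx_unit)
  exact ⟨r, by simpa [sub_eq_zero, sq, eq_comm] using hr⟩

theorem isSquare_quotient_of_isMaximal (F : Type*) {R : Type*} [Field F] [IsAlgClosed F]
    [CommRing R] [Algebra F R] [FiniteDimensional F R] (I : Ideal R) [I.IsMaximal]
    (y : R ⧸ I) : IsSquare y := by
  obtain ⟨c, rfl⟩ := (IsAlgClosed.algebraMap_bijective_of_isIntegral (k := F)).2 y
  obtain ⟨d, rfl⟩ := IsAlgClosed.exists_eq_mul_self c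
  exact ⟨algebraMap F _ d, map_mul _ _ _⟩

theorem isSquare_quotient_nilradical (F : Type*) {R : Type*} [Field F] [IsAlgClosed F]
    [CommRing R] [Algebra F R] [FiniteDimensional F R] (y : R ⧸ nilradical R) : IsSquare y := by
  have : IsArtinianRing R := .of_finite F R
  let e := IsArtinianRing.quotNilradicalEquivPi R
  have : IsSquare (e y) := by
    choose c hc using fun I : MaximalSpectrum R ↦
      have := I.isMaximal
      isSquare_quotient_of_isMaximal F I.asIdeal (e y I)
    exact ⟨c, funext hc⟩
  simpa using this.map e.symm

theorem IsUnit.isSquare_of_isAlgClosed {F R : Type*} [Field F] [IsAlgClosed F]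
    [CommRing R] [Algebra F R] [FiniteDimensional F R] (h2 : (2 : F) ≠ 0) {u : R}
    (hu : IsUnit u) : IsSquare u := by
  obtain ⟨x, hx⟩ := isSquare_quotient_nilradical F (Ideal.Quotient.mk _ u)
  obtain ⟨x, rfl⟩ := Ideal.Quotient.mk_surjective x
  refine isSquare_of_isNilpotent_mul_self_sub (x := x) ?_ hu ?_
  · simpa only [map_ofNat] using (isUnit_iff_ne_zero.mpr h2).map (algebraMap F R)
  · rw [← map_mul, Ideal.Quotient.eq, mem_nilradical] at hx
    simpa using hx.neg

section Adjoin

variable {F A : Type*} [Field F] [Ring A] [Algebra F A]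

theorem Units.commute_of_mem_adjoin_singleton {u v x : Aˣ}
    (hv : (v : A) ∈ Algebra.adjoin F {(u : A)}) (hux : Commute u x) : Commute v x :=
  (Algebra.commute_of_mem_adjoin_singleton_of_commute hv hux.symm.units_val).symm.units_of_val

variable [FiniteDimensional F A]

theorem Subalgebra.isUnit_of_isUnit_val (S : Subalgebra F A) {a : S} (ha : IsUnit (a : A)) :
    IsUnit a :=
  have : IsArtinianRing S := .of_finite F S
  IsArtinianRing.isUnit_of_mem_nonZeroDivisors <|
    comap_nonZeroDivisors_le_of_injective (f := S.val) Subtype.val_injective ha.mem_nonZeroDivisors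

theorem Units.inv_mem_adjoin_singleton (u : Aˣ) :
    ((u⁻¹ : Aˣ) : A) ∈ Algebra.adjoin F {(u : A)} := by
  obtain ⟨b, hb⟩ := (Subalgebra.isUnit_of_isUnit_val (Algebra.adjoin F {(u : A)})
    (a := ⟨u, Algebra.self_mem_adjoin_singleton F _⟩) u.isUnit).exists_right_inv
  rw [Units.inv_eq_of_mul_eq_one_right (congrArg Subtype.val hb)]
  exact b.2

theorem Units.star_mem_adjoin_singleton_of_mem_unitary [StarMul A] {u : Aˣ}
    (hu : u ∈ unitary Aˣ) : star (u : A) ∈ Algebra.adjoin F {(u : A)} := by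
  rw [← Units.coe_star, eq_inv_of_mul_eq_one_left (Unitary.star_mul_self_of_mem hu)]
  exact u.inv_mem_adjoin_singleton

theorem Units.exists_mem_adjoin_mul_self_eq [IsAlgClosed F] (h2 : (2 : F) ≠ 0) (u : Aˣ) :
    ∃ c : Aˣ, (c : A) ∈ Algebra.adjoin F {(u : A)} ∧ c * c = u := by
  obtain ⟨c, hc⟩ := (Subalgebra.isUnit_of_isUnit_val (Algebra.adjoin F {(u : A)})
    (a := ⟨u, Algebra.self_mem_adjoin_singleton F _⟩) u.isUnit).isSquare_of_isAlgClosed h2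
  have hc' : (c : A) * c = u := (congrArg Subtype.val hc).symm
  exact ⟨((Commute.refl _).isUnit_mul_iff.mp (hc' ▸ u.isUnit)).1.unit, c.2, Units.ext hc'⟩

end Adjoin

section StarAdjoin

variable {F A : Type*} [CommSemiring F] [StarRing F] [Semiring A] [StarRing A] [Algebra F A]
  [StarModule F A]

theorem star_mem_adjoin_singleton {a x : A} (hx : x ∈ Algebra.adjoin F {a}) :
    star x ∈ Algebra.adjoin F {star a} := by
  rwa [← Set.star_singleton, ← Subalgebra.star_adjoin_comm, Subalgebra.mem_star_iff, star_star]

theorem IsSelfAdjoint.of_mem_adjoin_singleton [TrivialStar F] {a x : A} (ha : IsSelfAdjoint a)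
    (hx : x ∈ Algebra.adjoin F {a}) : IsSelfAdjoint x := by
  induction hx using Algebra.adjoin_induction with
  | mem y hy => rwa [Set.mem_singleton_iff.mp hy]
  | algebraMap r => exact (IsSelfAdjoint.all r).algebraMap A
  | add y z _ _ hy hz => exact hy.add hz
  | mul y z hy' hz' hy hz =>
    exact (hy.commute_iff hz).mp <| Algebra.commute_of_mem_adjoin_singleton_of_commute hz'
      (Algebra.commute_of_mem_adjoin_self hy').symm

end StarAdjoin

section Unitary

variable {F A : Type*} [Field F] [IsAlgClosed F] [StarRing F] [TrivialStar F] [Ring A]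
  [StarRing A] [Algebra F A] [StarModule F A] [FiniteDimensional F A]

theorem exists_mem_unitary_mem_adjoin_pow_four_mul_sq_eq_one (h2 : (2 : F) ≠ 0) {e : Aˣ}
    (he : e ∈ unitary Aˣ) :
    ∃ w ∈ unitary Aˣ, (w : A) ∈ Algebra.adjoin F {(e : A)} ∧ w ^ 4 * e ^ 2 = 1 := by
  set S := Algebra.adjoin F {(e : A)}
  have hstar : ∀ a ∈ S, star a ∈ S := fun a ha ↦ Algebra.adjoin_le
    (Set.singleton_subset_iff.mpr (Units.star_mem_adjoin_singleton_of_mem_unitary he))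
    (star_mem_adjoin_singleton ha)
  -- `w = c⋆ h`, where `c² = e` and `h` is a self-adjoint square root of the involution `c⋆c`.
  obtain ⟨c, hcS, hc⟩ := e.exists_mem_adjoin_mul_self_eq h2
  obtain ⟨h, hhε, hh⟩ := (star c * c).exists_mem_adjoin_mul_self_eq h2
  have hh_sa : star (h : A) = h := (IsSelfAdjoint.of_mem_adjoin_singleton (by simp) hhε).star_eq
  have hhS : (h : A) ∈ S := Algebra.adjoin_le
    (Set.singleton_subset_iff.mpr (by simpa using mul_mem (hstar _ hcS) hcS)) hhε
  let C : S := ⟨c, hcS⟩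
  let C' : S := ⟨star c, hstar _ hcS⟩
  let H : S := ⟨h, hhS⟩
  let E : S := ⟨e, Algebra.self_mem_adjoin_singleton F _⟩
  let E' : S := ⟨star e, hstar _ E.2⟩
  have hC : C * C = E := Subtype.ext congr(Units.val $hc)
  have hC' : C' * C' = E' := Subtype.ext (by simpa using congr(star (Units.val $hc)))
  have hE : E' * E = 1 := Subtype.ext congr(Units.val $(Unitary.star_mul_self_of_mem he))
  have hH : H * H = C' * C := Subtype.ext congr(Units.val $hh)
  refine ⟨star c * h, mem_unitary_of_star_mul_self_eq_one (Units.ext ?_),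
    by simpa using mul_mem (hstar _ hcS) hhS, Units.ext ?_⟩
  · have : H * C * (C' * H) = 1 := by
      linear_combination (C' * C) * hH + C * C * hC' + E' * hC + hE
    simpa [hh_sa] using congr(Subtype.val $this)
  · have : (C' * H) ^ 4 * E ^ 2 = 1 := by
      linear_combination C' ^ 4 * E ^ 2 * (H * H + C' * C) * hH + C' ^ 6 * E ^ 2 * hC +
        E ^ 3 * (C' ^ 4 + C' ^ 2 * E' + E' ^ 2) * hC' + (E' ^ 2 * E ^ 2 + E' * E + 1) * hE
    simpa using congr(Subtype.val $this)

theorem exists_mem_unitary_conj_eq_inv (h2 : (2 : F) ≠ 0) {x g : Aˣ} (hx : x ∈ unitary Aˣ)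
    (hg : g * x * g⁻¹ = x⁻¹) : ∃ y ∈ unitary Aˣ, y * x * y⁻¹ = x⁻¹ := by
  obtain ⟨c, hcS, hc⟩ := (star g * g)⁻¹.exists_mem_adjoin_mul_self_eq h2
  have hc_sa : IsSelfAdjoint c :=
    Units.ext (IsSelfAdjoint.of_mem_adjoin_singleton (by simp) hcS).star_eq
  have hc_comm {z : Aˣ} (hz : Commute (star g * g) z) : Commute c z :=
    Units.commute_of_mem_adjoin_singleton hcS hz.inv_left
  exact ⟨g * c, mul_mem_unitary_of_mul_self_eq_inv hc_sa (hc_comm (Commute.refl _)) hc,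
    conj_mul_eq_inv_of_commute hg (hc_comm (commute_star_mul_self_of_conj_eq_inv hx hg))⟩

theorem exists_mem_unitary_conj_eq_inv_pow_four_eq_one (h2 : (2 : F) ≠ 0) {x y₀ : Aˣ}
    (hy₀ : y₀ ∈ unitary Aˣ) (h : y₀ * x * y₀⁻¹ = x⁻¹) :
    ∃ y ∈ unitary Aˣ, y * x * y⁻¹ = x⁻¹ ∧ y ^ 4 = 1 := by
  obtain ⟨w, hw, hwS, hw4⟩ :=
    exists_mem_unitary_mem_adjoin_pow_four_mul_sq_eq_one h2 (pow_mem hy₀ 2)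
  have hwy : Commute w y₀ := Units.commute_of_mem_adjoin_singleton hwS (Commute.pow_self y₀ 2)
  refine ⟨y₀ * w, mul_mem hy₀ hw, conj_mul_eq_inv_of_commute h
    (Units.commute_of_mem_adjoin_singleton hwS (commute_sq_of_conj_eq_inv h)), ?_⟩
  rw [hwy.symm.mul_pow, ← (hwy.pow_pow 4 4).eq]
  simpa [← pow_mul] using hw4

theorem exists_mem_unitary_pow_four_eq_one_mul_eq (h2 : (2 : F) ≠ 0) {x g : Aˣ}
    (hx : x ∈ unitary Aˣ) (hg : g * x * g⁻¹ = x⁻¹) :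
    ∃ y ∈ unitary Aˣ, ∃ z ∈ unitary Aˣ, y ^ 4 = 1 ∧ z ^ 4 = 1 ∧ x = y * z := by
  obtain ⟨y₀, hy₀, h₀⟩ := exists_mem_unitary_conj_eq_inv h2 hx hg
  obtain ⟨y, hy, hyx, hy4⟩ := exists_mem_unitary_conj_eq_inv_pow_four_eq_one h2 hy₀ h₀
  exact ⟨y, hy, y⁻¹ * x, mul_mem (Unitary.inv_mem hy) hx, hy4, pow_four_inv_mul_eq_one hyx hy4,
    (mul_inv_cancel_left y x).symm⟩

end Unitary

theorem unitary_splits_order_four {F : Type*} [Field F] [IsAlgClosed F] (h2 : (2 : F) ≠ 0)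
    {A : Type*} [Ring A] [Algebra F A] [FiniteDimensional F A]
    (s : A →ₗ[F] A) (hmul : ∀ a b : A, s (a * b) = s b * s a) (hinv : ∀ a : A, s (s a) = a)
    (x : Aˣ) (hx : s (x : A) * (x : A) = 1)
    (h : ∃ z : Aˣ, (z : A) * (x : A) * (↑z⁻¹ : A) = (↑x⁻¹ : A)) :
    ∃ y z : Aˣ, s (y : A) * (y : A) = 1 ∧ s (z : A) * (z : A) = 1 ∧
      y ^ 4 = 1 ∧ z ^ 4 = 1 ∧ x = y * z := by
  let _ : StarRing A :=
    { star := s, star_involutive := hinv, star_mul := hmul, star_add := map_add s }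
  let _ : StarRing F := starRingOfComm
  have : TrivialStar F := ⟨fun _ ↦ rfl⟩
  have : StarModule F A := ⟨map_smul s⟩
  obtain ⟨g, hg⟩ := h
  obtain ⟨y, hy, z, hz, hy4, hz4, rfl⟩ := exists_mem_unitary_pow_four_eq_one_mul_eq h2
    (mem_unitary_of_star_mul_self_eq_one (Units.ext hx)) (Units.ext hg)
  exact ⟨y, z, congr(Units.val $(Unitary.star_mul_self_of_mem hy)),
    congr(Units.val $(Unitary.star_mul_self_of_mem hz)), hy4, hz4, rfl⟩
end
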